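/- arXiv:1302.0394 — 8 statements merged into one kernel-verified Lean document; each statement's English description precedes it below -/
import Mathlib

section
/- Let p be an odd prime with p ≡ 3 (mod 4) and m an odd positive integer not divisible by 3. If (x,y) ∈ F_{p^m}² satisfies x^(p+1) + y^(p+1) + 1 = 0 and x^(p²+1) + y^(p²+1) + 1 = 0, then x ∈ F_p and y ∈ F_p. -/
/-- card `p^m` with `m > 0` and `p` prime gives characteristic `p`. -/
lemma myCharP {F : Type*} [Field F] [Fintype F] {p m : ℕ} (hp : p.Prime) (hm0 : 0 < m)
    (hcard : Fintype.card F = p ^ m) : CharP F p := by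
  obtain ⟨n, hr, hq⟩ := FiniteField.card F (ringChar F)
  have h1 : p ∣ (ringChar F) ^ (n : ℕ) := by
    rw [← hq, hcard]; exact dvd_pow_self p hm0.ne'
  have hpr : p = ringChar F := (Nat.prime_dvd_prime_iff_eq hp hr).mp (hp.dvd_of_dvd_pow h1)
  rw [hpr]
  exact ringChar.charP F

/-- `p^m % 4 = 3` when `p % 4 = 3` and `m` odd. -/
lemma mypowmod {p m : ℕ} (hp3 : p % 4 = 3) (hm : Odd m) : p ^ m % 4 = 3 := by
  obtain ⟨k, rfl⟩ := hm
  rw [Nat.pow_mod, hp3]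
  rw [pow_add, pow_mul, Nat.mul_mod, Nat.pow_mod]
  norm_num

/-- If `t^(p^3) = t` and `t^(p^m) = t` with `3 ∤ m`, then `t^p = t`. -/
lemma frob_gcd {F : Type*} [Field F] {p m : ℕ} (hm3 : ¬ (3 ∣ m))
    (t : F) (h3 : t ^ (p ^ 3) = t) (hmm : t ^ (p ^ m) = t) : t ^ p = t := by
  have iter3 : ∀ k, t ^ (p ^ (3 * k)) = t := by
    intro k
    induction k with
    | zero => simp
    | succ n ih =>
      have h : 3 * (n + 1) = 3 * n + 3 := by ring
      rw [h, pow_add, pow_mul, ih, h3]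
  have iterm : ∀ k, t ^ (p ^ (m * k)) = t := by
    intro k
    induction k with
    | zero => simp
    | succ n ih =>
      have h : m * (n + 1) = m * n + m := by ring
      rw [h, pow_add, pow_mul, ih, hmm]
  obtain ⟨a, b, hab⟩ : ∃ a b, 3 * a = 1 + m * b := by
    rcases (by omega : m % 3 = 1 ∨ m % 3 = 2) with h | h
    · exact ⟨2 * (m / 3) + 1, 2, by omega⟩
    · exact ⟨m / 3 + 1, 1, by omega⟩
  have h := iter3 a
  rw [hab, pow_add, pow_one, mul_comm, pow_mul, iterm b] at h
  exact h

/-- Auxiliary contradiction: no `y` with `y^(p+1) = -1` and `y^(p^2+1) = -1`. -/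
lemma aux_contr {F : Type*} [Field F] [Fintype F] {p m : ℕ} (hp : p.Prime) (hp3 : p % 4 = 3)
    (hm : Odd m) (hm0 : 0 < m) (hcard : Fintype.card F = p ^ m)
    (y : F) (h1 : y ^ (p + 1) = -1) (h2 : y ^ (p ^ 2 + 1) = -1) : False := by
  have hy : y ≠ 0 := by
    rintro rfl
    rw [zero_pow (by positivity)] at h1
    exact one_ne_zero (neg_eq_zero.mp h1.symm)
  have hp1 : 1 ≤ p := hp.one_lt.le.trans' (by norm_num)
  have hpp : p ≤ p ^ 2 := by nlinarith
  have key : (y ^ (p - 1)) ^ p = 1 := by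
    have hdiv : y ^ (p ^ 2 + 1) = y ^ (p ^ 2 - p) * y ^ (p + 1) := by
      rw [← pow_add]
      congr 1
      omega
    rw [hdiv, h1] at h2
    have h2' : y ^ (p ^ 2 - p) = 1 := by linear_combination -h2
    rw [← pow_mul]
    have hexp : (p - 1) * p = p ^ 2 - p := by
      rw [Nat.sub_mul, one_mul, pow_two]
    rw [hexp, h2']
  have hordp : orderOf (y ^ (p - 1)) ∣ p := orderOf_dvd_of_pow_eq_one key
  have keyN : (y ^ (p - 1)) ^ (Fintype.card F - 1) = 1 := by
    rw [← pow_mul, mul_comm, pow_mul]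
    rw [FiniteField.pow_card_sub_one_eq_one y hy, one_pow]
  have hordN : orderOf (y ^ (p - 1)) ∣ Fintype.card F - 1 := orderOf_dvd_of_pow_eq_one keyN
  have hcop : Nat.Coprime p (Fintype.card F - 1) := by
    rw [hcard]
    refine (Nat.Prime.coprime_iff_not_dvd hp).mpr ?_
    intro hdvd
    have h1' : p ∣ p ^ m := dvd_pow_self p hm0.ne'
    have hd : p ∣ p ^ m - (p ^ m - 1) := Nat.dvd_sub h1' hdvd
    have hpm1 : 1 ≤ p ^ m := Nat.one_le_pow _ _ hp.pos
    rw [Nat.sub_sub_self hpm1] at hd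
    exact absurd (Nat.dvd_one.mp hd) hp.one_lt.ne'
  have hord1 : orderOf (y ^ (p - 1)) = 1 :=
    Nat.eq_one_of_dvd_coprimes hcop hordp hordN
  have hyp1 : y ^ (p - 1) = 1 := orderOf_eq_one_iff.mp hord1
  have hsq : y * y = -1 := by
    have hE : p + 1 = (p - 1) + 2 := by omega
    rw [hE, pow_add, hyp1, one_mul] at h1
    calc y * y = y ^ 2 := (sq y).symm
      _ = -1 := h1
  have hIsq : IsSquare (-1 : F) := ⟨y, hsq.symm⟩
  rw [FiniteField.isSquare_neg_one_iff] at hIsq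
  exact hIsq (by rw [hcard]; exact mypowmod hp3 hm)

theorem stmt_1 (p m : ℕ) (hp : p.Prime) (hp3 : p % 4 = 3) (hm : Odd m)
    (hm0 : 0 < m) (hm3 : ¬ (3 ∣ m))
    (F : Type*) [Field F] [Fintype F] (hcard : Fintype.card F = p ^ m)
    (x y : F)
    (h2 : x ^ (p + 1) + y ^ (p + 1) + 1 = 0)
    (h3 : x ^ (p ^ 2 + 1) + y ^ (p ^ 2 + 1) + 1 = 0) :
    x ^ p = x ∧ y ^ p = y := by
  haveI := Fact.mk hp
  haveI hcF : CharP F p := myCharP hp hm0 hcard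
  have hup : (x ^ p - x) ^ p = x ^ (p * p) - x ^ p := by
    rw [sub_pow_char, ← pow_mul]
  have hvp : (y ^ p - y) ^ p = y ^ (p * p) - y ^ p := by
    rw [sub_pow_char, ← pow_mul]
  have hB : x * (x ^ p - x) ^ p + y * (y ^ p - y) ^ p = 0 := by
    rw [hup, hvp]
    linear_combination h3 - h2
  have frobeq : ∀ z w : F, z + w + 1 = 0 → z ^ p + w ^ p + 1 = 0 := by
    intro z w h
    have h' := congrArg (· ^ p) h
    simpa [add_pow_char, zero_pow hp.ne_zero] using h'
  have h2p := frobeq _ _ h2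
  have h2pp := frobeq _ _ h2p
  have h3p := frobeq _ _ h3
  have hC : x ^ (p ^ 3) * (x ^ p - x) ^ p + y ^ (p ^ 3) * (y ^ p - y) ^ p = 0 := by
    rw [hup, hvp]
    linear_combination h2pp - h3p
  have key : x ^ p - x = 0 ∧ y ^ p - y = 0 := by
    by_cases hD : x * y ^ (p ^ 3) - x ^ (p ^ 3) * y = 0
    · -- determinant zero case
      have hx : x ≠ 0 := by
        intro hx0
        rw [hx0, zero_pow (Nat.succ_ne_zero p)] at h2
        rw [hx0, zero_pow (Nat.succ_ne_zero _)] at h3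
        exact aux_contr hp hp3 hm hm0 hcard y (by linear_combination h2)
          (by linear_combination h3)
      have hy : y ≠ 0 := by
        intro hy0
        rw [hy0, zero_pow (Nat.succ_ne_zero p)] at h2
        rw [hy0, zero_pow (Nat.succ_ne_zero _)] at h3
        exact aux_contr hp hp3 hm hm0 hcard x (by linear_combination h2)
          (by linear_combination h3)
      have ht3 : (x / y) ^ (p ^ 3) = x / y := by
        rw [div_pow, div_eq_div_iff (pow_ne_zero _ hy) hy]
        linear_combination -hD
      have htm : (x / y) ^ (p ^ m) = x / y := by
        rw [← hcard, FiniteField.pow_card]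
      have htp : (x / y) ^ p = x / y := frob_gcd hm3 _ ht3 htm
      have hxy : x ^ p * y = x * y ^ p := by
        rw [div_pow, div_eq_div_iff (pow_ne_zero _ hy) hy] at htp
        linear_combination htp
      have hyu : y * (x ^ p - x) = x * (y ^ p - y) := by linear_combination hxy
      have hP : y ^ p * (x ^ p - x) ^ p = x ^ p * (y ^ p - y) ^ p := by
        rw [← mul_pow, ← mul_pow, hyu]
      have hu0 : (x ^ p - x) ^ p * (x ^ (p + 1) + y ^ (p + 1)) = 0 := by
        linear_combination x ^ p * hB + y * hP
      have hm1 : x ^ (p + 1) + y ^ (p + 1) = -1 := by linear_combination h2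
      rw [hm1] at hu0
      have hup0 : (x ^ p - x) ^ p = 0 := by linear_combination -hu0
      have hu00 : x ^ p - x = 0 := (pow_eq_zero_iff hp.ne_zero).mp hup0
      refine ⟨hu00, ?_⟩
      rw [hu00, mul_zero] at hyu
      exact (mul_eq_zero.mp hyu.symm).resolve_left hx
    · -- determinant nonzero case
      have hu0 : (x ^ p - x) ^ p * (x * y ^ (p ^ 3) - x ^ (p ^ 3) * y) = 0 := by
        linear_combination y ^ (p ^ 3) * hB - y * hC
      have hv0 : (y ^ p - y) ^ p * (x * y ^ (p ^ 3) - x ^ (p ^ 3) * y) = 0 := by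
        linear_combination x * hC - x ^ (p ^ 3) * hB
      have hu1 : (x ^ p - x) ^ p = 0 := by
        rcases mul_eq_zero.mp hu0 with h | h
        · exact h
        · exact absurd h hD
      have hv1 : (y ^ p - y) ^ p = 0 := by
        rcases mul_eq_zero.mp hv0 with h | h
        · exact h
        · exact absurd h hD
      exact ⟨(pow_eq_zero_iff hp.ne_zero).mp hu1, (pow_eq_zero_iff hp.ne_zero).mp hv1⟩
  exact ⟨sub_eq_zero.mp key.1, sub_eq_zero.mp key.2⟩
end

section
/- Let p be an odd prime with p ≡ 3 (mod 4), q = p^m with m odd and 3 ∤ m. Then the number of solutions (x,y,z) ∈ F_q³ of the system x² + y² + z² = 0, x^(p+1) + y^(p+1) + z^(p+1) = 0, x^(p²+1) + y^(p²+1) + z^(p²+1) = 0 equals (p+1)(q−1) + 1. -/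
/-!
Since `q ≡ 3 (mod 4)`, `-1` is not a square in `F_q`, so `x² + y² = 0` forces `x = y = 0`.
Hence a solution with `z = 0` is trivial, and a solution with `z ≠ 0` gives `a = x / z`,
`b = y / z` with `a² + b² = -1` and `a^(p+1) + b^(p+1) = -1`. Applying Frobenius to the first
equation gives `a^(2p) + b^(2p) = -1`, and then `(a^p - a)² + (b^p - b)² = 0`, so `a` and `b`
lie in the prime field `F_p`, where the third equation reduces to the first. The nonzero
solutions are therefore the points `(a z, b z, z)` with `z ∈ F_q^×` and `(a, b)` on the conic
`a² + b² + 1 = 0` over `F_p`, which has `p + 1` points because `-1` is not a square mod `p`.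
-/

section SumOfTwoSquares

variable {K : Type*} [Field K]

lemma ringChar_ne_two_of_not_isSquare_neg_one (h : ¬IsSquare (-1 : K)) : ringChar K ≠ 2 := by
  intro h2
  have : CharP K 2 := ringChar.of_eq h2
  exact h ⟨1, by rw [CharTwo.neg_eq, mul_one]⟩

lemma eq_zero_of_sq_add_sq_eq_zero (h : ¬IsSquare (-1 : K)) {x y : K} (hxy : x ^ 2 + y ^ 2 = 0) :
    x = 0 ∧ y = 0 := by
  obtain rfl | hy := eq_or_ne y 0
  · simpa using hxy
  · exact absurd ⟨x / y, by field_simp; linear_combination -hxy⟩ h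

def unitsEquivHyperbola (hK : ringChar K ≠ 2) : Kˣ ≃ {v : K × K // v.2 ^ 2 = 1 + v.1 ^ 2} where
  toFun u := ⟨(((u : K) - (u⁻¹ : Kˣ)) / 2, ((u : K) + (u⁻¹ : Kˣ)) / 2), by
    have h2 := Ring.two_ne_zero hK
    field_simp
    linear_combination 4 * u.mul_inv⟩
  invFun v := ⟨v.1.2 + v.1.1, v.1.2 - v.1.1, by linear_combination v.2, by linear_combination v.2⟩
  left_inv u := by
    have h2 := Ring.two_ne_zero hK
    ext
    simp only
    field_simp
    ring
  right_inv v := by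
    have h2 := Ring.two_ne_zero hK
    ext <;> simp only [Units.inv_mk] <;> field_simp <;> ring

variable [Fintype K] [DecidableEq K]

lemma card_sq_eq_add_card_sq_eq_neg (h : ¬IsSquare (-1 : K)) (d : K) :
    Fintype.card {y : K // y ^ 2 = d} + Fintype.card {y : K // y ^ 2 = -d} = 2 := by
  have hK := ringChar_ne_two_of_not_isSquare_neg_one h
  have hd := quadraticChar_card_sqrts hK d
  have hnd := quadraticChar_card_sqrts hK (-d)
  have hχ : quadraticChar K (-d) = -quadraticChar K d := by
    rw [neg_eq_neg_one_mul d, map_mul, quadraticChar_neg_one_iff_not_isSquare.mpr h, neg_one_mul]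
  rw [hχ] at hnd
  simp only [Set.toFinset_ofPred, ← Fintype.card_subtype] at hd hnd
  omega

/-- Over each `a` there are exactly two `b` with `b² = ±(1 + a²)`, so this conic and the hyperbola
`b² = 1 + a²` have `2q` points together, and the hyperbola has `q - 1`. -/
lemma card_sq_add_sq_add_one_eq_zero (h : ¬IsSquare (-1 : K)) :
    Fintype.card {v : K × K // v.1 ^ 2 + v.2 ^ 2 + 1 = 0} = Fintype.card K + 1 := by
  have hyperbola := Fintype.card_congr
    (unitsEquivHyperbola (ringChar_ne_two_of_not_isSquare_neg_one h))
  rw [Fintype.card_units] at hyperbola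
  have circle : Fintype.card {v : K × K // v.1 ^ 2 + v.2 ^ 2 + 1 = 0} =
      Fintype.card {v : K × K // v.2 ^ 2 = -(1 + v.1 ^ 2)} :=
    Fintype.card_congr (Equiv.subtypeEquivRight fun v ↦
      ⟨fun hv ↦ by linear_combination hv, fun hv ↦ by linear_combination hv⟩)
  have fibres : Fintype.card {v : K × K // v.2 ^ 2 = 1 + v.1 ^ 2} +
      Fintype.card {v : K × K // v.2 ^ 2 = -(1 + v.1 ^ 2)} = 2 * Fintype.card K := by
    rw [Fintype.card_congr (Equiv.subtypeProdEquivSigmaSubtype fun a b : K ↦ b ^ 2 = 1 + a ^ 2),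
      Fintype.card_congr (Equiv.subtypeProdEquivSigmaSubtype fun a b : K ↦ b ^ 2 = -(1 + a ^ 2)),
      Fintype.card_sigma, Fintype.card_sigma, ← Finset.sum_add_distrib]
    simp only [card_sq_eq_add_card_sq_eq_neg h, Finset.sum_const, Finset.card_univ, smul_eq_mul,
      mul_comm]
  have : 0 < Fintype.card K := Fintype.card_pos
  omega

end SumOfTwoSquares

lemma pow_pow_add_one_eq_sq {M : Type*} [Monoid M] {p : ℕ} {a : M} (ha : a ^ p = a) (n : ℕ) :
    a ^ (p ^ n + 1) = a ^ 2 := by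
  have hfix : a ^ p ^ n = a := by
    induction n with
    | zero => rw [pow_zero, pow_one]
    | succ n ih => rw [pow_succ, pow_mul, ih, ha]
  rw [pow_succ, hfix, sq]

section PrimeField

variable {p : ℕ} [Fact p.Prime] {F : Type*} [Field F] [CharP F p]

lemma exists_castHom_eq_of_pow_char_eq_self {x : F} (hx : x ^ p = x) :
    ∃ c : ZMod p, ZMod.castHom dvd_rfl F c = x := by
  rw [← Subfield.mem_bot_iff_pow_eq_self F p, ← ZMod.fieldRange_castHom_eq_bot p] at hx
  exact hx

lemma pow_char_eq_self_of_sq_add_sq (hF : ¬IsSquare (-1 : F)) {a b : F}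
    (h2 : a ^ 2 + b ^ 2 + 1 = 0) (hp : a ^ (p + 1) + b ^ (p + 1) + 1 = 0) :
    a ^ p = a ∧ b ^ p = b := by
  have frobenius : (a ^ p) ^ 2 + (b ^ p) ^ 2 = -1 := by
    rw [← pow_mul, ← pow_mul, mul_comm, pow_mul, pow_mul, ← add_pow_char,
      show a ^ 2 + b ^ 2 = -1 by linear_combination h2, neg_one_pow_char]
  have key : (a ^ p - a) ^ 2 + (b ^ p - b) ^ 2 = 0 := by
    linear_combination frobenius + h2 - 2 * hp
  obtain ⟨ha, hb⟩ := eq_zero_of_sq_add_sq_eq_zero hF key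
  exact ⟨sub_eq_zero.mp ha, sub_eq_zero.mp hb⟩

variable (p F) in
def coneMap : Option ({w : ZMod p × ZMod p // w.1 ^ 2 + w.2 ^ 2 + 1 = 0} × Fˣ) → F × F × F
  | none => 0
  | some (w, z) => (ZMod.castHom dvd_rfl F w.1.1 * z, ZMod.castHom dvd_rfl F w.1.2 * z, z)

lemma coneMap_injective : Function.Injective (coneMap p F) := by
  rintro (_ | ⟨⟨⟨a, b⟩, hab⟩, z⟩) (_ | ⟨⟨⟨a', b'⟩, hab'⟩, z'⟩) h <;>
    simp only [coneMap, Prod.mk.injEq, Prod.zero_eq_mk] at h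
  · rfl
  · exact absurd h.2.2.symm z'.ne_zero
  · exact absurd h.2.2 z.ne_zero
  · obtain ⟨ha, hb, hz⟩ := h
    obtain rfl := Units.ext hz
    obtain rfl := (ZMod.castHom dvd_rfl F).injective (mul_right_cancel₀ z.ne_zero ha)
    obtain rfl := (ZMod.castHom dvd_rfl F).injective (mul_right_cancel₀ z.ne_zero hb)
    rfl

lemma coneMap_mem (t) :
    (coneMap p F t).1 ^ 2 + (coneMap p F t).2.1 ^ 2 + (coneMap p F t).2.2 ^ 2 = 0 ∧
    (coneMap p F t).1 ^ (p + 1) + (coneMap p F t).2.1 ^ (p + 1) +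
      (coneMap p F t).2.2 ^ (p + 1) = 0 ∧
    (coneMap p F t).1 ^ (p ^ 2 + 1) + (coneMap p F t).2.1 ^ (p ^ 2 + 1) +
      (coneMap p F t).2.2 ^ (p ^ 2 + 1) = 0 := by
  rcases t with _ | ⟨⟨⟨a, b⟩, hab⟩, z⟩
  · simp [coneMap]
  simp only [coneMap]
  set φ := ZMod.castHom dvd_rfl F
  have hab' : φ a ^ 2 + φ b ^ 2 + 1 = 0 := by simpa using congrArg φ hab
  have hfix (c : ZMod p) : φ c ^ p = φ c := by rw [← map_pow, ZMod.pow_card]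
  have hn (n : ℕ) :
      (φ a * z) ^ (p ^ n + 1) + (φ b * z) ^ (p ^ n + 1) + (z : F) ^ (p ^ n + 1) = 0 := by
    rw [mul_pow, mul_pow, pow_pow_add_one_eq_sq (hfix a), pow_pow_add_one_eq_sq (hfix b)]
    linear_combination (z : F) ^ (p ^ n + 1) * hab'
  exact ⟨by simpa using hn 0, by simpa using hn 1, hn 2⟩

lemma exists_coneMap_eq (hF : ¬IsSquare (-1 : F)) (v : F × F × F)
    (h2 : v.1 ^ 2 + v.2.1 ^ 2 + v.2.2 ^ 2 = 0)
    (hp : v.1 ^ (p + 1) + v.2.1 ^ (p + 1) + v.2.2 ^ (p + 1) = 0) :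
    ∃ t, coneMap p F t = v := by
  obtain ⟨x, y, z⟩ := v
  obtain rfl | hz := eq_or_ne z 0
  · obtain ⟨rfl, rfl⟩ := eq_zero_of_sq_add_sq_eq_zero hF (by simpa using h2)
    exact ⟨none, rfl⟩
  have h2' : (x / z) ^ 2 + (y / z) ^ 2 + 1 = 0 := by
    field_simp
    linear_combination h2
  have hp' : (x / z) ^ (p + 1) + (y / z) ^ (p + 1) + 1 = 0 := by
    rw [div_pow, div_pow, ← add_div, div_add_one (pow_ne_zero _ hz), hp, zero_div]
  obtain ⟨ha, hb⟩ := pow_char_eq_self_of_sq_add_sq hF h2' hp'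
  obtain ⟨a, hxa⟩ := exists_castHom_eq_of_pow_char_eq_self ha
  obtain ⟨b, hyb⟩ := exists_castHom_eq_of_pow_char_eq_self hb
  have hab : a ^ 2 + b ^ 2 + 1 = 0 :=
    (ZMod.castHom dvd_rfl F).injective (by
      rw [map_add, map_add, map_pow, map_pow, hxa, hyb, map_one, map_zero, h2'])
  refine ⟨some (⟨(a, b), hab⟩, Units.mk0 z hz), ?_⟩
  simp only [coneMap, hxa, hyb, Units.val_mk0, div_mul_cancel₀ _ hz]

theorem card_solutions_of_not_isSquare_neg_one [Fintype F] [DecidableEq F]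
    (hF : ¬IsSquare (-1 : F)) :
    Fintype.card {v : F × F × F //
        v.1 ^ 2 + v.2.1 ^ 2 + v.2.2 ^ 2 = 0 ∧
        v.1 ^ (p + 1) + v.2.1 ^ (p + 1) + v.2.2 ^ (p + 1) = 0 ∧
        v.1 ^ (p ^ 2 + 1) + v.2.1 ^ (p ^ 2 + 1) + v.2.2 ^ (p ^ 2 + 1) = 0} =
      (p + 1) * (Fintype.card F - 1) + 1 := by
  have hZ : ¬IsSquare (-1 : ZMod p) := fun ⟨c, hc⟩ ↦
    hF ⟨ZMod.castHom dvd_rfl F c, by simpa using congrArg (ZMod.castHom dvd_rfl F) hc⟩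
  rw [Fintype.card_subtype]
  trans (Finset.univ.image (coneMap p F)).card
  · congr 1
    ext v
    simp only [Finset.mem_filter, Finset.mem_univ, true_and, Finset.mem_image]
    constructor
    · rintro ⟨h2, hp, -⟩
      exact exists_coneMap_eq hF v h2 hp
    · rintro ⟨t, rfl⟩
      exact coneMap_mem t
  rw [Finset.card_image_of_injective _ coneMap_injective, Finset.card_univ, Fintype.card_option,
    Fintype.card_prod, card_sq_add_sq_add_one_eq_zero hZ, ZMod.card, Fintype.card_units]

end PrimeField

lemma pow_mod_four_eq_three {p m : ℕ} (hp : p % 4 = 3) (hm : Odd m) : p ^ m % 4 = 3 := by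
  obtain ⟨k, rfl⟩ := hm
  rw [Nat.pow_mod, hp, pow_succ, pow_mul, Nat.mul_mod, Nat.pow_mod]
  norm_num

theorem stmt_3_general (p m : ℕ) (hp : p.Prime) (hp3 : p % 4 = 3) (hm : Odd m)
    (F : Type*) [Field F] [Fintype F] [DecidableEq F]
    (hcard : Fintype.card F = p ^ m) :
    Fintype.card {v : F × F × F //
        v.1 ^ 2 + v.2.1 ^ 2 + v.2.2 ^ 2 = 0 ∧
        v.1 ^ (p + 1) + v.2.1 ^ (p + 1) + v.2.2 ^ (p + 1) = 0 ∧
        v.1 ^ (p ^ 2 + 1) + v.2.1 ^ (p ^ 2 + 1) + v.2.2 ^ (p ^ 2 + 1) = 0} =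
      (p + 1) * (p ^ m - 1) + 1 := by
  have : Fact p.Prime := ⟨hp⟩
  have : CharP F p := charP_of_card_eq_prime_pow hcard
  have hF : ¬IsSquare (-1 : F) := by
    rw [FiniteField.isSquare_neg_one_iff, hcard, pow_mod_four_eq_three hp3 hm, not_not]
  rw [card_solutions_of_not_isSquare_neg_one hF, hcard]

theorem stmt_3 (p m : ℕ) (hp : p.Prime) (hp3 : p % 4 = 3) (hm : Odd m)
    (hm3 : ¬ (3 ∣ m))
    (F : Type*) [Field F] [Fintype F] [DecidableEq F]
    (hcard : Fintype.card F = p ^ m) :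
    Fintype.card {v : F × F × F //
        v.1 ^ 2 + v.2.1 ^ 2 + v.2.2 ^ 2 = 0 ∧
        v.1 ^ (p + 1) + v.2.1 ^ (p + 1) + v.2.2 ^ (p + 1) = 0 ∧
        v.1 ^ (p ^ 2 + 1) + v.2.1 ^ (p ^ 2 + 1) + v.2.2 ^ (p ^ 2 + 1) = 0} =
      (p + 1) * (p ^ m - 1) + 1 :=
  stmt_3_general p m hp hp3 hm F hcard
end

section
/- Let p = 3 and q = 3^m. The number of solutions (x,y,z) ∈ F_q³ of the system x² + y² + z² + 1 = 0, x⁴ + y⁴ + z⁴ + 1 = 0, x¹⁰ + y¹⁰ + z¹⁰ + 1 = 0 equals 4(2·3^m − 3). -/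
open Finset

private lemma disj_images {α β : Type*} [DecidableEq β] {s t : Finset α} {f g : α → β}
    (h : ∀ a ∈ s, ∀ b ∈ t, f a ≠ g b) : Disjoint (s.image f) (t.image g) := by
  rw [Finset.disjoint_left]
  intro x hx hy
  obtain ⟨a, ha, rfl⟩ := Finset.mem_image.mp hx
  obtain ⟨b, hb, hfg⟩ := Finset.mem_image.mp hy
  exact h a ha b hb hfg.symm

theorem stmt_4 (m : ℕ)
    (F : Type*) [Field F] [Fintype F] [DecidableEq F]
    (hcard : Fintype.card F = 3 ^ m) [CharP F 3] :
    Fintype.card {v : F × F × F //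
        v.1 ^ 2 + v.2.1 ^ 2 + v.2.2 ^ 2 + 1 = 0 ∧
        v.1 ^ 4 + v.2.1 ^ 4 + v.2.2 ^ 4 + 1 = 0 ∧
        v.1 ^ 10 + v.2.1 ^ 10 + v.2.2 ^ 10 + 1 = 0} =
      4 * (2 * 3 ^ m - 3) := by
  classical
  have h3 : (3 : F) = 0 := by exact_mod_cast CharP.cast_eq_zero F 3
  have h01 : (0 : F) ≠ -1 := fun h => one_ne_zero (α := F) (by linear_combination h)
  have h1m : (1 : F) ≠ -1 := fun h => one_ne_zero (α := F) (by linear_combination h3 - h)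
  have hq3 : 3 ≤ 3 ^ m := by
    have h2 : 1 < Fintype.card F := Fintype.one_lt_card
    rw [hcard] at h2
    rcases Nat.eq_zero_or_pos m with rfl | hm
    · simp at h2
    · calc (3:ℕ) = 3 ^ 1 := rfl
        _ ≤ 3 ^ m := Nat.pow_le_pow_right (by norm_num) hm
  have PA : ∀ a : F, (a^2 + (a+1)^2 + (a+2)^2 + 1 = 0) ∧ (a^4 + (a+1)^4 + (a+2)^4 + 1 = 0) ∧
      (a^10 + (a+1)^10 + (a+2)^10 + 1 = 0) := fun a =>
    ⟨by linear_combination (a^2+2*a+2) * h3,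
     by linear_combination (a^4+4*a^3+10*a^2+12*a+6) * h3,
     by linear_combination (a^10+10*a^9+75*a^8+360*a^7+1190*a^6+2772*a^5+4550*a^4+5160*a^3+3855*a^2+1710*a+342) * h3⟩
  have PB : ∀ s : F, ((-s)^2 + (s+1)^2 + (s-1)^2 + 1 = 0) ∧ ((-s)^4 + (s+1)^4 + (s-1)^4 + 1 = 0) ∧
      ((-s)^10 + (s+1)^10 + (s-1)^10 + 1 = 0) := fun s =>
    ⟨by linear_combination (s^2+1) * h3,
     by linear_combination (s^4+4*s^2+1) * h3,
     by linear_combination (s^10+30*s^8+140*s^6+140*s^4+30*s^2+1) * h3⟩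
  rw [Fintype.card_subtype]
  have hset : (univ.filter fun v : F × F × F =>
        v.1 ^ 2 + v.2.1 ^ 2 + v.2.2 ^ 2 + 1 = 0 ∧
        v.1 ^ 4 + v.2.1 ^ 4 + v.2.2 ^ 4 + 1 = 0 ∧
        v.1 ^ 10 + v.2.1 ^ 10 + v.2.2 ^ 10 + 1 = 0) =
      ((univ.image fun a : F => (a, a+1, a+2)) ∪ (univ.image fun a : F => (a, a+2, a+1)) ∪
       ((univ \ {0}).image fun s : F => (-s, s+1, s-1)) ∪
       ((univ \ {0}).image fun s : F => (-s, s-1, s+1)) ∪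
       ((univ \ {0,1}).image fun s : F => (s+1, -s, s-1)) ∪
       ((univ \ {0,-1}).image fun s : F => (s-1, -s, s+1)) ∪
       ((univ \ {0,1,-1}).image fun s : F => (s+1, s-1, -s)) ∪
       ((univ \ {0,1,-1}).image fun s : F => (s-1, s+1, -s))) := by
    ext ⟨x, y, z⟩
    simp only [mem_filter, mem_univ, true_and]
    constructor
    · rintro ⟨ha1, ha2, -⟩
      obtain ⟨s, hs⟩ : ∃ s : F, s = x + y + z := ⟨_, rfl⟩
      have he2 : x*y + y*z + z*x = -s^2 - 1 := by
        linear_combination ha1 + (x*y + y*z + z*x) * h3 + (s + x + y + z) * hs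
      by_cases hs0 : s = 0
      · have hsum0 : x + y + z = 0 := by linear_combination hs0 - hs
        have key0 : (y - x - 1) * (y - x + 1) = 0 := by
          linear_combination -ha1 + (z - x - y) * hsum0 + (x^2 + y^2) * h3
        rcases mul_eq_zero.mp key0 with h | h
        · have hy : y = x + 1 := by linear_combination h
          have hz : z = x + 2 := by linear_combination hsum0 - h - (x+1) * h3
          refine mem_union_left _ (mem_union_left _ (mem_union_left _ (mem_union_left _
            (mem_union_left _ (mem_union_left _ (mem_union_left _ ?_))))))
          exact mem_image.mpr ⟨x, mem_univ x, by rw [hy, hz]⟩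
        · have hy : y = x + 2 := by linear_combination h - h3
          have hz : z = x + 1 := by linear_combination hsum0 - h - x * h3
          refine mem_union_left _ (mem_union_left _ (mem_union_left _ (mem_union_left _
            (mem_union_left _ (mem_union_left _ (mem_union_right _ ?_))))))
          exact mem_image.mpr ⟨x, mem_univ x, by rw [hy, hz]⟩
      · have hkey : s * (x*y*z - (s - s^3)) = 0 := by
          linear_combination ha2 + (x*y + y*z + z*x - 1) * ha1
            + ((x+y+z)^2*(x*y+y*z+z*x) - (x+y+z)*(x*y*z) - (x*y+y*z+z*x)) * h3
            + (x*y*z - (s + (x+y+z)) + (s + (x+y+z))*(s^2 + (x+y+z)^2)) * hs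
        have he3 : x*y*z = s - s^3 := by
          rcases mul_eq_zero.mp hkey with h | h
          · exact absurd h hs0
          · linear_combination h
        have hfac : (x + s) * (x - s - 1) * (x - s + 1) = 0 := by
          linear_combination (-x) * he2 + he3 - x^2 * hs
        rcases mul_eq_zero.mp hfac with h12 | hx3
        · rcases mul_eq_zero.mp h12 with hx1 | hx2
          · -- x = -s
            have hxv : x = -s := by linear_combination hx1
            have hq : (y - s - 1) * (y - s + 1) = 0 := by
              linear_combination -he2 + (z + s) * hxv + (s - y) * hs
            rcases mul_eq_zero.mp hq with h | h
            · have hy : y = s + 1 := by linear_combination h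
              have hz : z = s - 1 := by linear_combination -hs - hxv - h
              refine mem_union_left _ (mem_union_left _ (mem_union_left _ (mem_union_left _
                (mem_union_left _ (mem_union_right _ ?_)))))
              refine mem_image.mpr ⟨s, ?_, ?_⟩
              · simp only [mem_sdiff, mem_univ, mem_singleton, true_and]; exact hs0
              · rw [hxv, hy, hz]
            · have hy : y = s - 1 := by linear_combination h
              have hz : z = s + 1 := by linear_combination -hs - hxv - h
              refine mem_union_left _ (mem_union_left _ (mem_union_left _ (mem_union_left _
                (mem_union_right _ ?_))))
              refine mem_image.mpr ⟨s, ?_, ?_⟩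
              · simp only [mem_sdiff, mem_univ, mem_singleton, true_and]; exact hs0
              · rw [hxv, hy, hz]
          · -- x = s + 1
            have hxv : x = s + 1 := by linear_combination hx2
            have hq : (y + s) * (y - s + 1) = 0 := by
              linear_combination -he2 + (-x - y) * hs + (-x - y - 1) * hxv
            rcases mul_eq_zero.mp hq with h | h
            · have hy : y = -s := by linear_combination h
              have hz : z = s - 1 := by linear_combination -hs - hxv - h
              by_cases hs1 : s = 1
              · -- the triple is (-1+..) pattern of f1 at 1
                refine mem_union_left _ (mem_union_left _ (mem_union_left _ (mem_union_left _
                  (mem_union_left _ (mem_union_right _ ?_)))))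
                refine mem_image.mpr ⟨1, ?_, ?_⟩
                · simp only [mem_sdiff, mem_univ, mem_singleton, true_and]
                  exact one_ne_zero
                · simp only [Prod.mk.injEq]
                  refine ⟨by linear_combination -hxv - hs1 - h3,
                    by linear_combination -hy + hs1 + h3, by linear_combination -hz - hs1⟩
              · refine mem_union_left _ (mem_union_left _ (mem_union_left _
                  (mem_union_right _ ?_)))
                refine mem_image.mpr ⟨s, ?_, ?_⟩
                · simp only [mem_sdiff, mem_univ, mem_insert, mem_singleton, true_and, not_or]
                  exact ⟨hs0, hs1⟩
                · rw [hxv, hy, hz]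
            · have hy : y = s - 1 := by linear_combination h
              have hz : z = -s := by linear_combination -hs - hxv - h
              by_cases hs1 : s = 1
              · -- f2 at 1
                refine mem_union_left _ (mem_union_left _ (mem_union_left _ (mem_union_left _
                  (mem_union_right _ ?_))))
                refine mem_image.mpr ⟨1, ?_, ?_⟩
                · simp only [mem_sdiff, mem_univ, mem_singleton, true_and]
                  exact one_ne_zero
                · simp only [Prod.mk.injEq]
                  refine ⟨by linear_combination -hxv - hs1 - h3,
                    by linear_combination -hy - hs1, by linear_combination -hz + hs1 + h3⟩
              · by_cases hsm : s = -1
                · -- f3 at -1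
                  refine mem_union_left _ (mem_union_left _ (mem_union_left _
                    (mem_union_right _ ?_)))
                  refine mem_image.mpr ⟨-1, ?_, ?_⟩
                  · simp only [mem_sdiff, mem_univ, mem_insert, mem_singleton, true_and, not_or]
                    exact ⟨neg_ne_zero.mpr one_ne_zero, fun hh => h1m hh.symm⟩
                  · simp only [Prod.mk.injEq]
                    refine ⟨by linear_combination -hxv - hsm,
                      by linear_combination -hy - hsm + h3, by linear_combination -hz + hsm - h3⟩
                · refine mem_union_left _ (mem_union_right _ ?_)
                  refine mem_image.mpr ⟨s, ?_, ?_⟩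
                  · simp only [mem_sdiff, mem_univ, mem_insert, mem_singleton, true_and, not_or]
                    exact ⟨hs0, hs1, hsm⟩
                  · rw [hxv, hy, hz]
        · -- x = s - 1
          have hxv : x = s - 1 := by linear_combination hx3
          have hq : (y + s) * (y - s - 1) = 0 := by
            linear_combination -he2 + (-x - y) * hs + (-x - y + 1) * hxv
          rcases mul_eq_zero.mp hq with h | h
          · have hy : y = -s := by linear_combination h
            have hz : z = s + 1 := by linear_combination -hs - hxv - h
            by_cases hsm : s = -1
            · -- f2 at -1
              refine mem_union_left _ (mem_union_left _ (mem_union_left _ (mem_union_left _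
                (mem_union_right _ ?_))))
              refine mem_image.mpr ⟨-1, ?_, ?_⟩
              · simp only [mem_sdiff, mem_univ, mem_singleton, true_and]
                exact neg_ne_zero.mpr one_ne_zero
              · simp only [Prod.mk.injEq]
                refine ⟨by linear_combination -hxv - hsm + h3,
                  by linear_combination -hy + hsm - h3, by linear_combination -hz - hsm⟩
            · refine mem_union_left _ (mem_union_left _ (mem_union_right _ ?_))
              refine mem_image.mpr ⟨s, ?_, ?_⟩
              · simp only [mem_sdiff, mem_univ, mem_insert, mem_singleton, true_and, not_or]
                exact ⟨hs0, hsm⟩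
              · rw [hxv, hy, hz]
          · have hy : y = s + 1 := by linear_combination h
            have hz : z = -s := by linear_combination -hs - hxv - h
            by_cases hs1 : s = 1
            · -- f4 at 1
              refine mem_union_left _ (mem_union_left _ (mem_union_right _ ?_))
              refine mem_image.mpr ⟨1, ?_, ?_⟩
              · simp only [mem_sdiff, mem_univ, mem_insert, mem_singleton, true_and, not_or]
                exact ⟨one_ne_zero, h1m⟩
              · simp only [Prod.mk.injEq]
                refine ⟨by linear_combination -hxv - hs1,
                  by linear_combination -hy - hs1 - h3, by linear_combination -hz + hs1 + h3⟩
            · by_cases hsm : s = -1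
              · -- f1 at -1
                refine mem_union_left _ (mem_union_left _ (mem_union_left _ (mem_union_left _
                  (mem_union_left _ (mem_union_right _ ?_)))))
                refine mem_image.mpr ⟨-1, ?_, ?_⟩
                · simp only [mem_sdiff, mem_univ, mem_singleton, true_and]
                  exact neg_ne_zero.mpr one_ne_zero
                · simp only [Prod.mk.injEq]
                  refine ⟨by linear_combination -hxv - hsm + h3,
                    by linear_combination -hy - hsm, by linear_combination -hz + hsm - h3⟩
              · refine mem_union_right _ ?_
                refine mem_image.mpr ⟨s, ?_, ?_⟩
                · simp only [mem_sdiff, mem_univ, mem_insert, mem_singleton, true_and, not_or]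
                  exact ⟨hs0, hs1, hsm⟩
                · rw [hxv, hy, hz]
    · intro hS
      simp only [mem_union, mem_image, mem_sdiff, mem_univ, mem_insert, mem_singleton,
        true_and, not_or, Prod.mk.injEq] at hS
      rcases hS with (((((((⟨a, rfl, rfl, rfl⟩ | ⟨a, rfl, rfl, rfl⟩) | ⟨a, -, rfl, rfl, rfl⟩) |
        ⟨a, -, rfl, rfl, rfl⟩) | ⟨a, -, rfl, rfl, rfl⟩) | ⟨a, -, rfl, rfl, rfl⟩) |
        ⟨a, -, rfl, rfl, rfl⟩) | ⟨a, -, rfl, rfl, rfl⟩)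
      · exact ⟨by linear_combination (PA a).1, by linear_combination (PA a).2.1,
          by linear_combination (PA a).2.2⟩
      · exact ⟨by linear_combination (PA a).1, by linear_combination (PA a).2.1,
          by linear_combination (PA a).2.2⟩
      · exact ⟨by linear_combination (PB a).1, by linear_combination (PB a).2.1,
          by linear_combination (PB a).2.2⟩
      · exact ⟨by linear_combination (PB a).1, by linear_combination (PB a).2.1,
          by linear_combination (PB a).2.2⟩
      · exact ⟨by linear_combination (PB a).1, by linear_combination (PB a).2.1,
          by linear_combination (PB a).2.2⟩
      · exact ⟨by linear_combination (PB a).1, by linear_combination (PB a).2.1,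
          by linear_combination (PB a).2.2⟩
      · exact ⟨by linear_combination (PB a).1, by linear_combination (PB a).2.1,
          by linear_combination (PB a).2.2⟩
      · exact ⟨by linear_combination (PB a).1, by linear_combination (PB a).2.1,
          by linear_combination (PB a).2.2⟩
  rw [hset]
  -- disjointness facts
  have extract1 : ∀ b : F, b ∈ (univ \ ({0} : Finset F)) → b ≠ 0 := by
    intro b hb; simpa [mem_sdiff] using hb
  have extract2 : ∀ b : F, b ∈ (univ \ ({0, 1} : Finset F)) → b ≠ 0 ∧ b ≠ 1 := by
    intro b hb; simpa [mem_sdiff, not_or] using hb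
  have extract2' : ∀ b : F, b ∈ (univ \ ({0, -1} : Finset F)) → b ≠ 0 ∧ b ≠ -1 := by
    intro b hb; simpa [mem_sdiff, not_or] using hb
  have extract3 : ∀ b : F, b ∈ (univ \ ({0, 1, -1} : Finset F)) → b ≠ 0 ∧ b ≠ 1 ∧ b ≠ -1 := by
    intro b hb; simpa [mem_sdiff, not_or] using hb
  -- A1 vs A2
  have dA12 : Disjoint ((univ : Finset F).image fun a => (a, a+1, a+2))
      (univ.image fun a => (a, a+2, a+1)) := disj_images fun a _ b _ heq => by
    simp only [Prod.mk.injEq] at heq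
    exact one_ne_zero (α := F) (by linear_combination heq.1 - heq.2.1)
  rw [card_union_of_disjoint ?d8, card_union_of_disjoint ?d7, card_union_of_disjoint ?d6,
      card_union_of_disjoint ?d5, card_union_of_disjoint ?d4, card_union_of_disjoint ?d3,
      card_union_of_disjoint dA12]
  case d3 =>
    refine Finset.disjoint_union_left.mpr ⟨?_, ?_⟩ <;>
    · refine disj_images fun a _ b hb heq => ?_
      simp only [Prod.mk.injEq] at heq
      exact (extract1 b hb) (by linear_combination -heq.1 - heq.2.1 - heq.2.2 + (a+1) * h3)
  case d4 =>
    refine Finset.disjoint_union_left.mpr ⟨Finset.disjoint_union_left.mpr ⟨?_, ?_⟩, ?_⟩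
    · refine disj_images fun a _ b hb heq => ?_
      simp only [Prod.mk.injEq] at heq
      exact (extract1 b hb) (by linear_combination -heq.1 - heq.2.1 - heq.2.2 + (a+1) * h3)
    · refine disj_images fun a _ b hb heq => ?_
      simp only [Prod.mk.injEq] at heq
      exact (extract1 b hb) (by linear_combination -heq.1 - heq.2.1 - heq.2.2 + (a+1) * h3)
    · -- f1 vs f2
      refine disj_images fun a ha b hb heq => ?_
      simp only [Prod.mk.injEq] at heq
      have hab : a = b := by linear_combination heq.1 + heq.2.1 + heq.2.2
      exact one_ne_zero (α := F) (by linear_combination h3 - heq.2.1 + hab)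
  case d5 =>
    refine Finset.disjoint_union_left.mpr ⟨Finset.disjoint_union_left.mpr
      ⟨Finset.disjoint_union_left.mpr ⟨?_, ?_⟩, ?_⟩, ?_⟩
    · refine disj_images fun a _ b hb heq => ?_
      simp only [Prod.mk.injEq] at heq
      exact (extract2 b hb).1 (by linear_combination -heq.1 - heq.2.1 - heq.2.2 + (a+1) * h3)
    · refine disj_images fun a _ b hb heq => ?_
      simp only [Prod.mk.injEq] at heq
      exact (extract2 b hb).1 (by linear_combination -heq.1 - heq.2.1 - heq.2.2 + (a+1) * h3)
    · -- f1 vs f3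
      refine disj_images fun a ha b hb heq => ?_
      simp only [Prod.mk.injEq] at heq
      have hab : a = b := by linear_combination heq.1 + heq.2.1 + heq.2.2
      exact (extract2 b hb).2 (by linear_combination heq.1 + hab + b * h3)
    · -- f2 vs f3
      refine disj_images fun a ha b hb heq => ?_
      simp only [Prod.mk.injEq] at heq
      have hab : a = b := by linear_combination heq.1 + heq.2.1 + heq.2.2
      exact one_ne_zero (α := F) (by linear_combination -heq.2.2 + hab + h3)
  case d6 =>
    refine Finset.disjoint_union_left.mpr ⟨Finset.disjoint_union_left.mpr
      ⟨Finset.disjoint_union_left.mpr ⟨Finset.disjoint_union_left.mpr ⟨?_, ?_⟩, ?_⟩, ?_⟩, ?_⟩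
    · refine disj_images fun a _ b hb heq => ?_
      simp only [Prod.mk.injEq] at heq
      exact (extract2' b hb).1 (by linear_combination -heq.1 - heq.2.1 - heq.2.2 + (a+1) * h3)
    · refine disj_images fun a _ b hb heq => ?_
      simp only [Prod.mk.injEq] at heq
      exact (extract2' b hb).1 (by linear_combination -heq.1 - heq.2.1 - heq.2.2 + (a+1) * h3)
    · -- f1 vs f4
      refine disj_images fun a ha b hb heq => ?_
      simp only [Prod.mk.injEq] at heq
      have hab : a = b := by linear_combination heq.1 + heq.2.1 + heq.2.2
      exact one_ne_zero (α := F) (by linear_combination heq.2.2 - hab + h3)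
    · -- f2 vs f4
      refine disj_images fun a ha b hb heq => ?_
      simp only [Prod.mk.injEq] at heq
      have hab : a = b := by linear_combination heq.1 + heq.2.1 + heq.2.2
      exact (extract2' b hb).2 (by linear_combination heq.1 + hab + b * h3)
    · -- f3 vs f4
      refine disj_images fun a ha b hb heq => ?_
      simp only [Prod.mk.injEq] at heq
      have hab : a = b := by linear_combination heq.1 + heq.2.1 + heq.2.2
      exact one_ne_zero (α := F) (by linear_combination -heq.1 + hab + h3)
  case d7 =>
    refine Finset.disjoint_union_left.mpr ⟨Finset.disjoint_union_left.mpr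
      ⟨Finset.disjoint_union_left.mpr ⟨Finset.disjoint_union_left.mpr
      ⟨Finset.disjoint_union_left.mpr ⟨?_, ?_⟩, ?_⟩, ?_⟩, ?_⟩, ?_⟩
    · refine disj_images fun a _ b hb heq => ?_
      simp only [Prod.mk.injEq] at heq
      exact (extract3 b hb).1 (by linear_combination -heq.1 - heq.2.1 - heq.2.2 + (a+1) * h3)
    · refine disj_images fun a _ b hb heq => ?_
      simp only [Prod.mk.injEq] at heq
      exact (extract3 b hb).1 (by linear_combination -heq.1 - heq.2.1 - heq.2.2 + (a+1) * h3)
    · -- f1 vs f5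
      refine disj_images fun a ha b hb heq => ?_
      simp only [Prod.mk.injEq] at heq
      have hab : a = b := by linear_combination heq.1 + heq.2.1 + heq.2.2
      exact (extract3 b hb).2.1 (by linear_combination heq.1 + hab + b * h3)
    · -- f2 vs f5
      refine disj_images fun a ha b hb heq => ?_
      simp only [Prod.mk.injEq] at heq
      have hab : a = b := by linear_combination heq.1 + heq.2.1 + heq.2.2
      exact (extract3 b hb).2.1 (by linear_combination heq.1 + hab + b * h3)
    · -- f3 vs f5
      refine disj_images fun a ha b hb heq => ?_
      simp only [Prod.mk.injEq] at heq
      have hab : a = b := by linear_combination heq.1 + heq.2.1 + heq.2.2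
      exact (extract3 b hb).2.2 (by linear_combination heq.2.1 + hab + b * h3)
    · -- f4 vs f5
      refine disj_images fun a ha b hb heq => ?_
      simp only [Prod.mk.injEq] at heq
      have hab : a = b := by linear_combination heq.1 + heq.2.1 + heq.2.2
      exact (extract3 b hb).2.1 (by linear_combination -heq.2.2 + hab + b * h3)
  case d8 =>
    refine Finset.disjoint_union_left.mpr ⟨Finset.disjoint_union_left.mpr
      ⟨Finset.disjoint_union_left.mpr ⟨Finset.disjoint_union_left.mpr
      ⟨Finset.disjoint_union_left.mpr ⟨Finset.disjoint_union_left.mpr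
      ⟨?_, ?_⟩, ?_⟩, ?_⟩, ?_⟩, ?_⟩, ?_⟩
    · refine disj_images fun a _ b hb heq => ?_
      simp only [Prod.mk.injEq] at heq
      exact (extract3 b hb).1 (by linear_combination -heq.1 - heq.2.1 - heq.2.2 + (a+1) * h3)
    · refine disj_images fun a _ b hb heq => ?_
      simp only [Prod.mk.injEq] at heq
      exact (extract3 b hb).1 (by linear_combination -heq.1 - heq.2.1 - heq.2.2 + (a+1) * h3)
    · -- f1 vs f6
      refine disj_images fun a ha b hb heq => ?_
      simp only [Prod.mk.injEq] at heq
      have hab : a = b := by linear_combination heq.1 + heq.2.1 + heq.2.2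
      exact (extract3 b hb).2.2 (by linear_combination heq.1 + hab + b * h3)
    · -- f2 vs f6
      refine disj_images fun a ha b hb heq => ?_
      simp only [Prod.mk.injEq] at heq
      have hab : a = b := by linear_combination heq.1 + heq.2.1 + heq.2.2
      exact one_ne_zero (α := F) (by linear_combination heq.2.1 - hab + h3)
    · -- f3 vs f6
      refine disj_images fun a ha b hb heq => ?_
      simp only [Prod.mk.injEq] at heq
      have hab : a = b := by linear_combination heq.1 + heq.2.1 + heq.2.2
      exact (extract3 b hb).2.2 (by linear_combination -heq.2.2 + hab + b * h3)
    · -- f4 vs f6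
      refine disj_images fun a ha b hb heq => ?_
      simp only [Prod.mk.injEq] at heq
      have hab : a = b := by linear_combination heq.1 + heq.2.1 + heq.2.2
      exact (extract3 b hb).2.1 (by linear_combination heq.2.1 + hab + b * h3)
    · -- f5 vs f6
      refine disj_images fun a ha b hb heq => ?_
      simp only [Prod.mk.injEq] at heq
      have hab : a = b := by linear_combination heq.1 + heq.2.1 + heq.2.2
      exact one_ne_zero (α := F) (by linear_combination -heq.1 + hab + h3)
  -- now the cardinalities
  have cardU : (univ : Finset F).card = 3 ^ m := by rw [card_univ, hcard]
  have cD1 : ((univ : Finset F) \ {0}).card = 3 ^ m - 1 := by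
    rw [card_sdiff_of_subset (subset_univ _), card_singleton, cardU]
  have cD2 : ((univ : Finset F) \ {0, 1}).card = 3 ^ m - 2 := by
    rw [card_sdiff_of_subset (subset_univ _), cardU]
    congr 1
    rw [card_insert_of_notMem (by simp), card_singleton]
  have cD2' : ((univ : Finset F) \ {0, -1}).card = 3 ^ m - 2 := by
    rw [card_sdiff_of_subset (subset_univ _), cardU]
    congr 1
    rw [card_insert_of_notMem (by simp only [mem_singleton]; exact h01), card_singleton]
  have cD3 : ((univ : Finset F) \ {0, 1, -1}).card = 3 ^ m - 3 := by
    rw [card_sdiff_of_subset (subset_univ _), cardU]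
    congr 1
    rw [card_insert_of_notMem (by simp only [mem_insert, mem_singleton, not_or]; exact ⟨zero_ne_one, h01⟩),
        card_insert_of_notMem (by simpa using h1m), card_singleton]
  rw [card_image_of_injective _ (fun a b h => by exact congrArg Prod.fst h),
      card_image_of_injective _ (fun a b h => by exact congrArg Prod.fst h),
      card_image_of_injective _ (fun a b h => by
        have h1 := congrArg Prod.fst h; simp only at h1; linear_combination -h1),
      card_image_of_injective _ (fun a b h => by
        have h1 := congrArg Prod.fst h; simp only at h1; linear_combination -h1),
      card_image_of_injective _ (fun a b h => by
        have h1 := congrArg Prod.fst h; simp only at h1; linear_combination h1),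
      card_image_of_injective _ (fun a b h => by
        have h1 := congrArg Prod.fst h; simp only at h1; linear_combination h1),
      card_image_of_injective _ (fun a b h => by
        have h1 := congrArg Prod.fst h; simp only at h1; linear_combination h1),
      card_image_of_injective _ (fun a b h => by
        have h1 := congrArg Prod.fst h; simp only at h1; linear_combination h1)]
  rw [cardU, cD1, cD2, cD2', cD3]
  omega
end

section
/- Let q = 3^m with m odd and 3 ∤ m. The number of solutions (x,y,z,w) ∈ F_q⁴ of the system x² + y² + z² + w² = 0, x⁴ + y⁴ + z⁴ + w⁴ = 0, x¹⁰ + y¹⁰ + z¹⁰ + w¹⁰ = 0 equals 8(3^m − 1)² + 1. -/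
private def pvec {F : Type*} [Field F] (k : Fin 8) (b c : F) : F × F × F × F :=
  match k with
  | 0 => (b + c, -c, -b + c, b)
  | 1 => (c, b + c, b - c, b)
  | 2 => (b + c, c, b, b - c)
  | 3 => (c, b - c, b, -b - c)
  | 4 => (b + c, -c, b - c, -b)
  | 5 => (b + c, c, -b, -b + c)
  | 6 => (c, b + c, -b + c, -b)
  | 7 => (c, b - c, -b, b + c)

private lemma mem_pvec {F : Type*} [Field F] (h3 : (3:F) = 0) (k : Fin 8) (b c : F) :
    (pvec k b c).1 ^ 2 + (pvec k b c).2.1 ^ 2 + (pvec k b c).2.2.1 ^ 2 + (pvec k b c).2.2.2 ^ 2 = 0 ∧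
      (pvec k b c).1 ^ 4 + (pvec k b c).2.1 ^ 4 + (pvec k b c).2.2.1 ^ 4 + (pvec k b c).2.2.2 ^ 4 = 0 ∧
      (pvec k b c).1 ^ 10 + (pvec k b c).2.1 ^ 10 + (pvec k b c).2.2.1 ^ 10 + (pvec k b c).2.2.2 ^ 10 = 0 := by
  fin_cases k <;> simp only [pvec] <;> refine ⟨?_, ?_, ?_⟩
  · linear_combination (c^2 + b^2) * h3
  · linear_combination (c^4 + 4*b^2*c^2 + b^4) * h3
  · linear_combination (c^10 + 30*b^2*c^8 + 140*b^4*c^6 + 140*b^6*c^4 + 30*b^8*c^2 + b^10) * h3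
  · linear_combination (c^2 + b^2) * h3
  · linear_combination (c^4 + 4*b^2*c^2 + b^4) * h3
  · linear_combination (c^10 + 30*b^2*c^8 + 140*b^4*c^6 + 140*b^6*c^4 + 30*b^8*c^2 + b^10) * h3
  · linear_combination (c^2 + b^2) * h3
  · linear_combination (c^4 + 4*b^2*c^2 + b^4) * h3
  · linear_combination (c^10 + 30*b^2*c^8 + 140*b^4*c^6 + 140*b^6*c^4 + 30*b^8*c^2 + b^10) * h3
  · linear_combination (c^2 + b^2) * h3
  · linear_combination (c^4 + 4*b^2*c^2 + b^4) * h3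
  · linear_combination (c^10 + 30*b^2*c^8 + 140*b^4*c^6 + 140*b^6*c^4 + 30*b^8*c^2 + b^10) * h3
  · linear_combination (c^2 + b^2) * h3
  · linear_combination (c^4 + 4*b^2*c^2 + b^4) * h3
  · linear_combination (c^10 + 30*b^2*c^8 + 140*b^4*c^6 + 140*b^6*c^4 + 30*b^8*c^2 + b^10) * h3
  · linear_combination (c^2 + b^2) * h3
  · linear_combination (c^4 + 4*b^2*c^2 + b^4) * h3
  · linear_combination (c^10 + 30*b^2*c^8 + 140*b^4*c^6 + 140*b^6*c^4 + 30*b^8*c^2 + b^10) * h3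
  · linear_combination (c^2 + b^2) * h3
  · linear_combination (c^4 + 4*b^2*c^2 + b^4) * h3
  · linear_combination (c^10 + 30*b^2*c^8 + 140*b^4*c^6 + 140*b^6*c^4 + 30*b^8*c^2 + b^10) * h3
  · linear_combination (c^2 + b^2) * h3
  · linear_combination (c^4 + 4*b^2*c^2 + b^4) * h3
  · linear_combination (c^10 + 30*b^2*c^8 + 140*b^4*c^6 + 140*b^6*c^4 + 30*b^8*c^2 + b^10) * h3

private lemma pvec_zero {F : Type*} [Field F] (h3 : (3:F) = 0) (k : Fin 8) (b c : F)
    (h : pvec k b c = ((0:F), (0:F), (0:F), (0:F))) : b = 0 := by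
  fin_cases k <;> simp only [pvec, Prod.mk.injEq] at h <;> obtain ⟨e1, e2, e3, e4⟩ := h
  · linear_combination e1 + e2
  · linear_combination -e1 + e2
  · linear_combination e1 - e2
  · linear_combination e1 + e2
  · linear_combination e1 + e2
  · linear_combination e1 - e2
  · linear_combination -e1 + e2
  · linear_combination e1 + e2

private lemma pvec_inj {F : Type*} [Field F] (h3 : (3:F) = 0) {k k' : Fin 8} {b c b' c' : F}
    (hb : b ≠ 0) (hc : c ≠ 0) (hb' : b' ≠ 0) (hc' : c' ≠ 0)
    (h : pvec k b c = pvec k' b' c') : k = k' ∧ b = b' ∧ c = c' := by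
  fin_cases k <;> fin_cases k' <;> simp only [pvec, Prod.mk.injEq] at h <;>
      obtain ⟨e1, e2, e3, e4⟩ := h
  · exact ⟨rfl, by linear_combination e1 + e2, by linear_combination -e2⟩
  · exact absurd (by linear_combination e1 - e2 + e3 + (-c)*h3) hc'
  · exact absurd (by linear_combination e1 - e2 + e3 + (b' - c)*h3) hb'
  · exact absurd (by linear_combination e2 + e3 - e4 + (b' + b)*h3) hb
  · exact absurd (by linear_combination -e1 - e2 - e4 + (b)*h3) hb
  · exact absurd (by linear_combination -e1 - e2 - e4 + (-c' + b)*h3) hb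
  · exact absurd (by linear_combination e1 + e2 + e3 + (c')*h3) hc
  · exact absurd (by linear_combination e1 - e3 - e4) hb
  · exact absurd (by linear_combination -e1 + e2 - e3 + (-c')*h3) hc
  · exact ⟨rfl, by linear_combination -e1 + e2, by linear_combination e1⟩
  · exact absurd (by linear_combination -e1 - e3 - e4 + (-b' + b)*h3) hb
  · exact absurd (by linear_combination e1 - e2 - e4 + (c' + b)*h3) hb
  · exact absurd (by linear_combination -e1 - e2 + e3 + (c)*h3) hc'
  · exact absurd (by linear_combination e2 + e3 - e4) hb
  · exact absurd (by linear_combination e1 - e2 - e4 + (b)*h3) hb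
  · exact absurd (by linear_combination e1 + e2 - e3 + (b' - c)*h3) hb'
  · exact absurd (by linear_combination -e1 + e2 - e3 + (-c' + b)*h3) hb
  · exact absurd (by linear_combination -e2 - e3 - e4 + (-b' + b)*h3) hb
  · exact ⟨rfl, by linear_combination e1 - e2, by linear_combination e2⟩
  · exact absurd (by linear_combination -e1 - e2 + e3 + (c)*h3) hc
  · exact absurd (by linear_combination e1 + e2 - e4 + (b' - c)*h3) hb'
  · exact absurd (by linear_combination -e1 + e2 - e3 + (b)*h3) hb
  · exact absurd (by linear_combination e1 - e3 + e4) hb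
  · exact absurd (by linear_combination e1 - e2 - e3 + (c')*h3) hc'
  · exact absurd (by linear_combination e1 - e3 + e4 + (b' + b)*h3) hb
  · exact absurd (by linear_combination -e1 + e2 + e4 + (b' + c)*h3) hb'
  · exact absurd (by linear_combination e1 + e2 - e3 + (c')*h3) hc'
  · exact ⟨rfl, by linear_combination e1 + e2, by linear_combination e1⟩
  · exact absurd (by linear_combination e2 - e3 - e4) hb
  · exact absurd (by linear_combination -e1 + e2 - e3 + (c)*h3) hc
  · exact absurd (by linear_combination -e1 - e2 - e3 + (-c' + b)*h3) hb
  · exact absurd (by linear_combination -e1 - e2 - e3 + (b)*h3) hb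
  · exact absurd (by linear_combination -e1 - e2 + e4 + (b)*h3) hb
  · exact absurd (by linear_combination e1 + e2 - e3 + (c')*h3) hc
  · exact absurd (by linear_combination -e1 - e2 + e4 + (-c' + b)*h3) hb
  · exact absurd (by linear_combination e1 + e3 + e4) hb
  · exact ⟨rfl, by linear_combination e1 + e2, by linear_combination -e2⟩
  · exact absurd (by linear_combination e1 - e2 - e3 + (b' - c)*h3) hb'
  · exact absurd (by linear_combination e1 - e2 - e3 + (-c)*h3) hc'
  · exact absurd (by linear_combination e2 - e3 + e4 + (b' + b)*h3) hb
  · exact absurd (by linear_combination e1 + e2 + e4 + (b' - c)*h3) hb'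
  · exact absurd (by linear_combination e1 + e3 - e4) hb
  · exact absurd (by linear_combination -e1 + e2 + e3 + (b)*h3) hb
  · exact absurd (by linear_combination e1 - e2 + e3 + (c')*h3) hc'
  · exact absurd (by linear_combination -e1 + e2 + e3 + (-c' + b)*h3) hb
  · exact ⟨rfl, by linear_combination e1 - e2, by linear_combination e2⟩
  · exact absurd (by linear_combination -e2 + e3 + e4 + (-b' + b)*h3) hb
  · exact absurd (by linear_combination -e1 - e2 - e3 + (c)*h3) hc
  · exact absurd (by linear_combination -e1 - e2 - e3 + (c)*h3) hc'
  · exact absurd (by linear_combination e1 - e2 + e4 + (b)*h3) hb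
  · exact absurd (by linear_combination e2 - e3 + e4) hb
  · exact absurd (by linear_combination e1 + e2 + e3 + (b' - c)*h3) hb'
  · exact absurd (by linear_combination -e1 + e2 + e3 + (-c')*h3) hc
  · exact absurd (by linear_combination -e1 + e3 + e4 + (-b' + b)*h3) hb
  · exact ⟨rfl, by linear_combination -e1 + e2, by linear_combination e1⟩
  · exact absurd (by linear_combination e1 - e2 + e4 + (c' + b)*h3) hb
  · exact absurd (by linear_combination e2 + e3 + e4) hb
  · exact absurd (by linear_combination -e1 - e2 + e3 + (-c' + b)*h3) hb
  · exact absurd (by linear_combination -e1 + e2 + e3 + (c)*h3) hc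
  · exact absurd (by linear_combination -e1 - e2 + e3 + (b)*h3) hb
  · exact absurd (by linear_combination e1 + e3 - e4 + (b' + b)*h3) hb
  · exact absurd (by linear_combination e1 + e2 + e3 + (c')*h3) hc'
  · exact absurd (by linear_combination -e1 + e2 - e4 + (b' + c)*h3) hb'
  · exact ⟨rfl, by linear_combination e1 + e2, by linear_combination e1⟩

private lemma sol_repr {F : Type*} [Field F] (h3 : (3:F) = 0) (x y z w : F)
    (h1 : x ^ 2 + y ^ 2 + z ^ 2 + w ^ 2 = 0) (h2 : x ^ 4 + y ^ 4 + z ^ 4 + w ^ 4 = 0)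
    (hv : ¬(x = 0 ∧ y = 0 ∧ z = 0 ∧ w = 0)) :
    ∃ (k : Fin 8) (b c : F), b ≠ 0 ∧ c ≠ 0 ∧ (x, y, z, w) = pvec k b c := by
  have h4 : (y+z+w)*((x+z+w)*((x+y+w)*(x+y+z))) = 0 := by
    linear_combination (w^2 + z*w + z^2 + y*w + y*z + y^2 + x*w + x*z + x*y + x^2)*h1 - h2 + (y*z*w^2 + y*z^2*w + y^2*z*w + x*z*w^2 + x*z^2*w + x*y*w^2 + 3*x*y*z*w + x*y*z^2 + x*y^2*w + x*y^2*z + x^2*z*w + x^2*y*w + x^2*y*z)*h3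
  rcases mul_eq_zero.mp h4 with hL | h4
  · have hq : (z - y + x)*(-z + y + x) = 0 := by
      linear_combination h1 - (w - z - y)*hL - (z^2 + y^2)*h3
    rcases mul_eq_zero.mp hq with hX | hX
    · by_cases hb : (-z - y : F) = 0
      · have hc : (-y : F) ≠ 0 := by
          intro hc0
          exact hv ⟨by linear_combination hX + hb + hc0 + (y)*h3, by linear_combination -hc0, by linear_combination -hb + hc0, by linear_combination hL + hb⟩
        refine ⟨5, -(-y), -(-y), neg_ne_zero.mpr hc, neg_ne_zero.mpr hc, ?_⟩
        simp only [pvec, Prod.mk.injEq]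
        exact ⟨by first | trivial | linear_combination hX + hb, by first | trivial | linear_combination (0:ℤ)*h3, by first | trivial | linear_combination -hb, by first | trivial | linear_combination hL + hb⟩
      · by_cases hc0 : (-y : F) = 0
        · refine ⟨6, -(-z - y), -z - y, neg_ne_zero.mpr hb, hb, ?_⟩
          simp only [pvec, Prod.mk.injEq]
          exact ⟨by first | trivial | linear_combination hX + hc0 + (y)*h3, by first | trivial | linear_combination -hc0, by first | trivial | linear_combination hc0 + (z + y)*h3, by first | trivial | linear_combination hL⟩
        · refine ⟨0, -z - y, -y, hb, hc0, ?_⟩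
          simp only [pvec, Prod.mk.injEq]
          exact ⟨by first | trivial | linear_combination hX + (y)*h3, by first | trivial | linear_combination (0:ℤ)*h3, by first | trivial | linear_combination (0:ℤ)*h3, by first | trivial | linear_combination hL⟩
    · by_cases hb : (-z - y : F) = 0
      · have hc : (z - y : F) ≠ 0 := by
          intro hc0
          exact hv ⟨by linear_combination hX + hc0, by linear_combination hb + hc0 + (y)*h3, by linear_combination hb - hc0 + (z)*h3, by linear_combination hL + hb⟩
        refine ⟨3, -(z - y), z - y, neg_ne_zero.mpr hc, hc, ?_⟩
        simp only [pvec, Prod.mk.injEq]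
        exact ⟨by first | trivial | linear_combination hX, by first | trivial | linear_combination hb + (z)*h3, by first | trivial | linear_combination hb + (z)*h3, by first | trivial | linear_combination hL + hb⟩
      · by_cases hc0 : (z - y : F) = 0
        · refine ⟨0, -z - y, -(-z - y), hb, neg_ne_zero.mpr hb, ?_⟩
          simp only [pvec, Prod.mk.injEq]
          exact ⟨by first | trivial | linear_combination hX + hc0, by first | trivial | linear_combination hc0 + (y)*h3, by first | trivial | linear_combination -hc0 + (-y)*h3, by first | trivial | linear_combination hL⟩
        · refine ⟨1, -z - y, z - y, hb, hc0, ?_⟩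
          simp only [pvec, Prod.mk.injEq]
          exact ⟨by first | trivial | linear_combination hX, by first | trivial | linear_combination (y)*h3, by first | trivial | linear_combination (z)*h3, by first | trivial | linear_combination hL⟩
  rcases mul_eq_zero.mp h4 with hL | h4
  · have hq : (z + y - x)*(-z + y + x) = 0 := by
      linear_combination h1 - (w - z - x)*hL - (z^2 + x^2)*h3
    rcases mul_eq_zero.mp hq with hX | hX
    · by_cases hb : (z : F) = 0
      · have hc : (-z + x : F) ≠ 0 := by
          intro hc0
          exact hv ⟨by linear_combination hb + hc0, by linear_combination hX + hc0, by linear_combination hb, by linear_combination hL + hb - hc0 + (-z)*h3⟩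
        refine ⟨0, -(-z + x), -(-z + x), neg_ne_zero.mpr hc, neg_ne_zero.mpr hc, ?_⟩
        simp only [pvec, Prod.mk.injEq]
        exact ⟨by first | trivial | linear_combination hb + (-z + x)*h3, by first | trivial | linear_combination hX, by first | trivial | linear_combination hb, by first | trivial | linear_combination hL + hb + (-z)*h3⟩
      · by_cases hc0 : (-z + x : F) = 0
        · refine ⟨3, z, z, hb, hb, ?_⟩
          simp only [pvec, Prod.mk.injEq]
          exact ⟨by first | trivial | linear_combination hc0, by first | trivial | linear_combination hX + hc0, by first | trivial | linear_combination (0:ℤ)*h3, by first | trivial | linear_combination hL - hc0⟩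
        · refine ⟨2, z, -z + x, hb, hc0, ?_⟩
          simp only [pvec, Prod.mk.injEq]
          exact ⟨by first | trivial | linear_combination (0:ℤ)*h3, by first | trivial | linear_combination hX, by first | trivial | linear_combination (0:ℤ)*h3, by first | trivial | linear_combination hL + (-z)*h3⟩
    · by_cases hb : (z : F) = 0
      · have hc : (x : F) ≠ 0 := by
          intro hc0
          exact hv ⟨by linear_combination hc0, by linear_combination hX + hb - hc0, by linear_combination hb, by linear_combination hL - hb - hc0⟩
        refine ⟨6, x, x, hc, hc, ?_⟩
        simp only [pvec, Prod.mk.injEq]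
        exact ⟨by first | trivial | linear_combination (0:ℤ)*h3, by first | trivial | linear_combination hX + hb + (-x)*h3, by first | trivial | linear_combination hb, by first | trivial | linear_combination hL - hb⟩
      · by_cases hc0 : (x : F) = 0
        · refine ⟨5, -(z), z, neg_ne_zero.mpr hb, hb, ?_⟩
          simp only [pvec, Prod.mk.injEq]
          exact ⟨by first | trivial | linear_combination hc0, by first | trivial | linear_combination hX - hc0, by first | trivial | linear_combination (0:ℤ)*h3, by first | trivial | linear_combination hL - hc0 + (-z)*h3⟩
        · refine ⟨3, z, x, hb, hc0, ?_⟩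
          simp only [pvec, Prod.mk.injEq]
          exact ⟨by first | trivial | linear_combination (0:ℤ)*h3, by first | trivial | linear_combination hX, by first | trivial | linear_combination (0:ℤ)*h3, by first | trivial | linear_combination hL⟩
  rcases mul_eq_zero.mp h4 with hL | h4
  · have hq : (z + y - x)*(z - y + x) = 0 := by
      linear_combination h1 - (w - y - x)*hL - (y^2 + x^2)*h3
    rcases mul_eq_zero.mp hq with hX | hX
    · by_cases hb : (y + x : F) = 0
      · have hc : (-y : F) ≠ 0 := by
          intro hc0
          exact hv ⟨by linear_combination hb + hc0, by linear_combination -hc0, by linear_combination hX + hb - hc0 + (-y)*h3, by linear_combination hL - hb⟩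
        refine ⟨2, -(-y), -(-y), neg_ne_zero.mpr hc, neg_ne_zero.mpr hc, ?_⟩
        simp only [pvec, Prod.mk.injEq]
        exact ⟨by first | trivial | linear_combination hb + (-y)*h3, by first | trivial | linear_combination (0:ℤ)*h3, by first | trivial | linear_combination hX + hb + (-y)*h3, by first | trivial | linear_combination hL - hb⟩
      · by_cases hc0 : (-y : F) = 0
        · refine ⟨1, -(y + x), y + x, neg_ne_zero.mpr hb, hb, ?_⟩
          simp only [pvec, Prod.mk.injEq]
          exact ⟨by first | trivial | linear_combination hc0, by first | trivial | linear_combination -hc0, by first | trivial | linear_combination hX - hc0 + (x)*h3, by first | trivial | linear_combination hL⟩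
        · refine ⟨4, y + x, -y, hb, hc0, ?_⟩
          simp only [pvec, Prod.mk.injEq]
          exact ⟨by first | trivial | linear_combination (0:ℤ)*h3, by first | trivial | linear_combination (0:ℤ)*h3, by first | trivial | linear_combination hX + (-y)*h3, by first | trivial | linear_combination hL⟩
    · by_cases hb : (-y + x : F) = 0
      · have hc : (y : F) ≠ 0 := by
          intro hc0
          exact hv ⟨by linear_combination hb + hc0, by linear_combination hc0, by linear_combination hX - hb, by linear_combination hL - hb + hc0 + (-y)*h3⟩
        refine ⟨4, -(y), -(y), neg_ne_zero.mpr hc, neg_ne_zero.mpr hc, ?_⟩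
        simp only [pvec, Prod.mk.injEq]
        exact ⟨by first | trivial | linear_combination hb + (y)*h3, by first | trivial | linear_combination (0:ℤ)*h3, by first | trivial | linear_combination hX - hb, by first | trivial | linear_combination hL - hb + (-y)*h3⟩
      · by_cases hc0 : (y : F) = 0
        · refine ⟨7, -y + x, -y + x, hb, hb, ?_⟩
          simp only [pvec, Prod.mk.injEq]
          exact ⟨by first | trivial | linear_combination hc0, by first | trivial | linear_combination hc0, by first | trivial | linear_combination hX, by first | trivial | linear_combination hL + hc0 + (-x)*h3⟩
        · refine ⟨5, -y + x, y, hb, hc0, ?_⟩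
          simp only [pvec, Prod.mk.injEq]
          exact ⟨by first | trivial | linear_combination (0:ℤ)*h3, by first | trivial | linear_combination (0:ℤ)*h3, by first | trivial | linear_combination hX, by first | trivial | linear_combination hL + (-y)*h3⟩
  have hL := h4
  have hq : (w + y - x)*(w - y + x) = 0 := by
    linear_combination h1 - (z - y - x)*hL - (y^2 + x^2)*h3
  rcases mul_eq_zero.mp hq with hX | hX
  · by_cases hb : (y - x : F) = 0
    · have hc : (x : F) ≠ 0 := by
        intro hc0
        exact hv ⟨by linear_combination hc0, by linear_combination hb + hc0, by linear_combination hL - hb + hc0 + (-x)*h3, by linear_combination hX - hb⟩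
      refine ⟨7, -(x), x, neg_ne_zero.mpr hc, hc, ?_⟩
      simp only [pvec, Prod.mk.injEq]
      exact ⟨by first | trivial | linear_combination (0:ℤ)*h3, by first | trivial | linear_combination hb + (x)*h3, by first | trivial | linear_combination hL - hb + (-x)*h3, by first | trivial | linear_combination hX - hb⟩
    · by_cases hc0 : (x : F) = 0
      · refine ⟨4, y - x, -(y - x), hb, neg_ne_zero.mpr hb, ?_⟩
        simp only [pvec, Prod.mk.injEq]
        exact ⟨by first | trivial | linear_combination hc0, by first | trivial | linear_combination hc0, by first | trivial | linear_combination hL + hc0 + (-y)*h3, by first | trivial | linear_combination hX⟩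
      · refine ⟨6, y - x, x, hb, hc0, ?_⟩
        simp only [pvec, Prod.mk.injEq]
        exact ⟨by first | trivial | linear_combination (0:ℤ)*h3, by first | trivial | linear_combination (0:ℤ)*h3, by first | trivial | linear_combination hL + (-x)*h3, by first | trivial | linear_combination hX⟩
  · by_cases hb : (y + x : F) = 0
    · have hc : (x : F) ≠ 0 := by
        intro hc0
        exact hv ⟨by linear_combination hc0, by linear_combination hb - hc0, by linear_combination hL - hb, by linear_combination hX + hb + hc0 + (-x)*h3⟩
      refine ⟨1, x, x, hc, hc, ?_⟩
      simp only [pvec, Prod.mk.injEq]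
      exact ⟨by first | trivial | linear_combination (0:ℤ)*h3, by first | trivial | linear_combination hb + (-x)*h3, by first | trivial | linear_combination hL - hb, by first | trivial | linear_combination hX + hb + (-x)*h3⟩
    · by_cases hc0 : (x : F) = 0
      · refine ⟨2, -(y + x), y + x, neg_ne_zero.mpr hb, hb, ?_⟩
        simp only [pvec, Prod.mk.injEq]
        exact ⟨by first | trivial | linear_combination hc0, by first | trivial | linear_combination -hc0, by first | trivial | linear_combination hL, by first | trivial | linear_combination hX + hc0 + (y)*h3⟩
      · refine ⟨7, y + x, x, hb, hc0, ?_⟩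
        simp only [pvec, Prod.mk.injEq]
        exact ⟨by first | trivial | linear_combination (0:ℤ)*h3, by first | trivial | linear_combination (0:ℤ)*h3, by first | trivial | linear_combination hL, by first | trivial | linear_combination hX + (-x)*h3⟩


private def gmap {F : Type*} [Field F] (h3 : (3:F) = 0) :
    (Unit ⊕ (Fin 8 × {b : F // b ≠ 0} × {c : F // c ≠ 0})) →
      {v : F × F × F × F //
        v.1 ^ 2 + v.2.1 ^ 2 + v.2.2.1 ^ 2 + v.2.2.2 ^ 2 = 0 ∧
        v.1 ^ 4 + v.2.1 ^ 4 + v.2.2.1 ^ 4 + v.2.2.2 ^ 4 = 0 ∧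
        v.1 ^ 10 + v.2.1 ^ 10 + v.2.2.1 ^ 10 + v.2.2.2 ^ 10 = 0}
  | .inl _ => ⟨((0:F), (0:F), (0:F), (0:F)), by norm_num⟩
  | .inr (k, b, c) => ⟨pvec k b.1 c.1, mem_pvec h3 k b.1 c.1⟩

private lemma gmap_bij {F : Type*} [Field F] (h3 : (3:F) = 0) :
    Function.Bijective (gmap h3) := by
  constructor
  · rintro (u | ⟨k, ⟨b, hb⟩, ⟨c, hc⟩⟩) (u' | ⟨k', ⟨b', hb'⟩, ⟨c', hc'⟩⟩) h
    · rfl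
    · exfalso
      simp only [gmap, Subtype.mk.injEq] at h
      exact hb' (pvec_zero h3 k' b' c' h.symm)
    · exfalso
      simp only [gmap, Subtype.mk.injEq] at h
      exact hb (pvec_zero h3 k b c h)
    · simp only [gmap, Subtype.mk.injEq] at h
      obtain ⟨hk, hbb, hcc⟩ := pvec_inj h3 hb hc hb' hc' h
      subst hk; subst hbb; subst hcc
      rfl
  · rintro ⟨⟨x, y, z, w⟩, hP⟩
    obtain ⟨h1, h2, -⟩ := hP
    by_cases h0 : x = 0 ∧ y = 0 ∧ z = 0 ∧ w = 0
    · obtain ⟨rfl, rfl, rfl, rfl⟩ := h0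
      exact ⟨Sum.inl (), rfl⟩
    · obtain ⟨k, b, c, hb, hc, hrep⟩ := sol_repr h3 x y z w h1 h2 h0
      exact ⟨Sum.inr (k, ⟨b, hb⟩, ⟨c, hc⟩), Subtype.ext hrep.symm⟩

theorem stmt_5 (m : ℕ) (hm : Odd m) (hm3 : ¬ (3 ∣ m))
    (F : Type*) [Field F] [Fintype F] [DecidableEq F]
    (hcard : Fintype.card F = 3 ^ m) :
    Fintype.card {v : F × F × F × F //
        v.1 ^ 2 + v.2.1 ^ 2 + v.2.2.1 ^ 2 + v.2.2.2 ^ 2 = 0 ∧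
        v.1 ^ 4 + v.2.1 ^ 4 + v.2.2.1 ^ 4 + v.2.2.2 ^ 4 = 0 ∧
        v.1 ^ 10 + v.2.1 ^ 10 + v.2.2.1 ^ 10 + v.2.2.2 ^ 10 = 0} =
      8 * (3 ^ m - 1) ^ 2 + 1 := by
  have h3 : (3 : F) = 0 := by
    haveI := ringChar.charP F
    obtain ⟨n, hp, hc⟩ := FiniteField.card F (ringChar F)
    have hm0 : m ≠ 0 := by
      rintro rfl
      have := Nat.odd_iff.mp hm
      omega
    have hdvd : ringChar F ∣ 3 := by
      refine Nat.Prime.dvd_of_dvd_pow (n := m) hp ?_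
      rw [← hcard, hc]
      exact dvd_pow_self (ringChar F) (by exact_mod_cast n.pos.ne')
    have h33 : ringChar F = 3 := (Nat.prime_dvd_prime_iff_eq hp Nat.prime_three).mp hdvd
    calc (3 : F) = ((3 : ℕ) : F) := by norm_num
    _ = 0 := by rw [← h33]; exact CharP.cast_eq_zero F (ringChar F)
  classical
  rw [← Fintype.card_of_bijective (gmap_bij h3)]
  have hne : Fintype.card {b : F // b ≠ 0} = 3 ^ m - 1 := by
    rw [← hcard]
    simpa using Set.card_ne_eq (0 : F)
  rw [Fintype.card_sum, Fintype.card_prod, Fintype.card_prod, Fintype.card_unit,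
    Fintype.card_fin, hne]
  ring
end

section
/- Let p be an odd prime, q = p^m with m = 2t+1 odd. For 0 ≤ i ≤ t, the p-cyclotomic coset modulo p^m − 1 containing 1 + p^i, i.e. the set {(1+p^i)·p^j mod (p^m−1) : j ≥ 0}, has size exactly m. -/
/-! Multiplication by `p` on `ZMod (p ^ m - 1)` has period `m`, so the coset of `1 + p ^ i` has as
many elements as the minimal period `d` of `1 + p ^ i`, a divisor of `m`. A proper divisor of the
odd number `m = 2t + 1` is at most `t`, and for `0 < d ≤ t` the integer `(1 + p ^ i) * p ^ d` is
smaller than `p ^ m - 1` and larger than `1 + p ^ i`, so it is not congruent to `1 + p ^ i`. -/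

open Function

theorem Function.ncard_range_iterate_of_mem_periodicPts {α : Type*} {f : α → α} {x : α}
    (hx : x ∈ periodicPts f) : (Set.range fun n => f^[n] x).ncard = minimalPeriod f x := by
  have hrange : (Set.range fun n => f^[n] x) =
      (fun n => f^[n] x) '' Set.Iio (minimalPeriod f x) := by
    refine (Set.image_subset_range _ _).antisymm' ?_
    rintro _ ⟨n, rfl⟩
    exact ⟨n % minimalPeriod f x, Nat.mod_lt _ (minimalPeriod_pos_of_mem_periodicPts hx),
      iterate_mod_minimalPeriod_eq⟩
  rw [hrange, iterate_injOn_Iio_minimalPeriod.ncard_image, Set.ncard_Iio_nat]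

theorem ZMod.natCast_self_eq_one {n : ℕ} (hn : 0 < n) : (n : ZMod (n - 1)) = 1 := by
  have h := ZMod.natCast_self (n - 1)
  rwa [Nat.cast_sub hn, Nat.cast_one, sub_eq_zero] at h

theorem Nat.three_mul_le_of_dvd_of_lt_of_odd {d m : ℕ} (hm : Odd m) (hdm : d ∣ m) (hlt : d < m) :
    3 * d ≤ m := by
  obtain ⟨k, rfl⟩ := hdm
  obtain ⟨j, rfl⟩ := (Nat.odd_mul.mp hm).2
  have : j ≠ 0 := by rintro rfl; simp at hlt
  rw [mul_comm 3]
  exact Nat.mul_le_mul_left d (by omega)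

theorem one_add_pow_mul_pow_lt {p t i d : ℕ} (hp : 2 ≤ p) (hi : i ≤ t) (hd0 : 0 < d) (hd : d ≤ t) :
    (1 + p ^ i) * p ^ d < p ^ (2 * t + 1) - 1 := by
  have hpt : 2 ≤ p ^ t := hp.trans (Nat.le_self_pow (by omega) p)
  have hle : (1 + p ^ i) * p ^ d ≤ p ^ t + p ^ t * p ^ t := by
    rw [← one_add_mul]
    exact Nat.mul_le_mul (by gcongr; omega) (Nat.pow_le_pow_right (by omega) hd)
  have hsq : 2 * p ^ t ≤ p ^ t * p ^ t := Nat.mul_le_mul_right _ hpt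
  have hcube : 2 * (p ^ t * p ^ t) ≤ p ^ (2 * t + 1) := by
    rw [mul_comm 2, pow_succ, two_mul, ← pow_add]
    exact Nat.mul_le_mul_left _ hp
  omega

theorem ZMod.natCast_one_add_pow_mul_pow_ne {p t i d : ℕ} (hp : 2 ≤ p) (hi : i ≤ t) (hd0 : 0 < d)
    (hd : d ≤ t) :
    ((1 + p ^ i : ℕ) : ZMod (p ^ (2 * t + 1) - 1)) * (p : ZMod (p ^ (2 * t + 1) - 1)) ^ d ≠
      ((1 + p ^ i : ℕ) : ZMod (p ^ (2 * t + 1) - 1)) := by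
  have hlt := one_add_pow_mul_pow_lt hp hi hd0 hd
  have hpd : 1 < p ^ d := Nat.one_lt_pow hd0.ne' (by omega)
  rw [← Nat.cast_pow, ← Nat.cast_mul, Ne, ZMod.natCast_eq_natCast_iff', Nat.mod_eq_of_lt hlt,
    Nat.mod_eq_of_lt ((Nat.le_mul_of_pos_right _ (by omega)).trans_lt hlt)]
  exact fun h => hpd.ne' ((Nat.mul_eq_left (by positivity)).mp h)

theorem stmt_9_general (p t : ℕ) (hp : p.Prime) (m : ℕ) (hm : m = 2 * t + 1)
    (i : ℕ) (hi : i ≤ t) :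
    Set.ncard {x : ZMod (p ^ m - 1) |
        ∃ j : ℕ, x = ((1 + p ^ i : ℕ) : ZMod (p ^ m - 1)) * (p : ZMod (p ^ m - 1)) ^ j} = m := by
  subst hm
  set a : ZMod (p ^ (2 * t + 1) - 1) := ((1 + p ^ i : ℕ) : ZMod (p ^ (2 * t + 1) - 1))
  set f := (· * (p : ZMod (p ^ (2 * t + 1) - 1)))
  have horbit : {x | ∃ j : ℕ, x = a * (p : ZMod (p ^ (2 * t + 1) - 1)) ^ j} =
      Set.range fun j => f^[j] a := by
    ext x
    simp [f, eq_comm]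
  have hper : IsPeriodicPt f (2 * t + 1) a := by
    simp only [IsPeriodicPt, IsFixedPt, f, mul_right_iterate_apply, ← Nat.cast_pow,
      ZMod.natCast_self_eq_one (pow_pos hp.pos _), mul_one]
  rw [horbit, ncard_range_iterate_of_mem_periodicPts (mk_mem_periodicPts (by omega) hper)]
  have hdvd := hper.minimalPeriod_dvd
  have hpos := hper.minimalPeriod_pos (by omega)
  by_contra hne
  have hle := Nat.three_mul_le_of_dvd_of_lt_of_odd (odd_two_mul_add_one t) hdvd
    (lt_of_le_of_ne (Nat.le_of_dvd (by omega) hdvd) hne)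
  refine ZMod.natCast_one_add_pow_mul_pow_ne hp.two_le hi hpos (by omega) ?_
  simpa only [IsPeriodicPt, IsFixedPt, f, mul_right_iterate_apply] using
    isPeriodicPt_minimalPeriod f a

theorem stmt_9 (p t : ℕ) (hp : p.Prime) (hp2 : Odd p) (m : ℕ) (hm : m = 2 * t + 1)
    (i : ℕ) (hi : i ≤ t) :
    Set.ncard {x : ZMod (p ^ m - 1) |
        ∃ j : ℕ, x = ((1 + p ^ i : ℕ) : ZMod (p ^ m - 1)) * (p : ZMod (p ^ m - 1)) ^ j} = m :=
  stmt_9_general p t hp m hm i hi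
end

section
/- Let p be an odd prime, q = p^m with m = 2t+2 even. The p-cyclotomic coset modulo p^m − 1 containing 1 + p^(t+1) has size m/2, while for 0 ≤ i ≤ t the coset containing 1 + p^i has size m. -/
lemma coset_card' {N : ℕ} (s q : ZMod N) (k : ℕ) (hk : 0 < k)
    (hper : s * q ^ k = s)
    (hmin : ∀ d, 0 < d → d < k → s * q ^ d ≠ s) :
    Set.ncard {x : ZMod N | ∃ j, x = s * q ^ j} = k := by
  have hmul : ∀ a : ℕ, s * q ^ (k * a) = s := by
    intro a
    induction a with
    | zero => simp
    | succ n ih => rw [Nat.mul_succ, pow_add, ← mul_assoc, ih, hper]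
  have hred : ∀ j : ℕ, s * q ^ j = s * q ^ (j % k) := by
    intro j
    conv_lhs => rw [← Nat.div_add_mod j k]
    rw [pow_add, ← mul_assoc, hmul]
  have hset : {x : ZMod N | ∃ j, x = s * q ^ j}
      = ↑((Finset.range k).image (fun j => s * q ^ j)) := by
    ext x
    simp only [Set.mem_setOf_eq, Finset.coe_image, Set.mem_image, Finset.mem_coe,
      Finset.mem_range]
    constructor
    · rintro ⟨j, rfl⟩
      exact ⟨j % k, Nat.mod_lt _ hk, (hred j).symm⟩
    · rintro ⟨j, _, h⟩
      exact ⟨j, h.symm⟩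
  rw [hset, Set.ncard_coe_finset]
  rw [Finset.card_image_of_injOn, Finset.card_range]
  intro a ha b hb hab
  simp only [Finset.coe_range, Set.mem_Iio] at ha hb
  simp only at hab
  by_contra hne
  rcases Nat.lt_or_ge a b with h | h
  · have : s * q ^ (a + (k - b)) = s := by
      rw [pow_add, ← mul_assoc, hab, mul_assoc, ← pow_add,
        Nat.add_sub_cancel' (le_of_lt hb)]
      exact hper
    exact hmin (a + (k - b)) (by omega) (by omega) this
  · have hba : b < a := lt_of_le_of_ne h (Ne.symm hne)
    have : s * q ^ (b + (k - a)) = s := by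
      rw [pow_add, ← mul_assoc, ← hab, mul_assoc, ← pow_add,
        Nat.add_sub_cancel' (le_of_lt ha)]
      exact hper
    exact hmin (b + (k - a)) (by omega) (by omega) this

lemma zmod_ne' (N a b : ℕ) (hlt : b < a) (hup : a < N + b) :
    ((a : ZMod N)) ≠ ((b : ZMod N)) := by
  intro h
  have hme : a ≡ b [MOD N] := (ZMod.natCast_eq_natCast_iff a b N).mp h
  have hd : N ∣ a - b := (Nat.modEq_iff_dvd' (le_of_lt hlt)).mp hme.symm
  have := Nat.le_of_dvd (by omega) hd
  omega

theorem stmt_10 (p t : ℕ) (hp : p.Prime) (hp2 : Odd p) (m : ℕ) (hm : m = 2 * t + 2) :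
    Set.ncard {x : ZMod (p ^ m - 1) |
        ∃ j : ℕ, x = ((1 + p ^ (t + 1) : ℕ) : ZMod (p ^ m - 1)) * (p : ZMod (p ^ m - 1)) ^ j}
      = m / 2 ∧
    ∀ i : ℕ, i ≤ t →
      Set.ncard {x : ZMod (p ^ m - 1) |
          ∃ j : ℕ, x = ((1 + p ^ i : ℕ) : ZMod (p ^ m - 1)) * (p : ZMod (p ^ m - 1)) ^ j} = m := by
  subst hm
  have hp3 : 3 ≤ p := by
    have h2 := hp.two_le
    have ho := Nat.odd_iff.mp hp2
    omega
  set N := p ^ (2 * t + 2) - 1 with hN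
  have hple : ∀ e f : ℕ, e ≤ f → p ^ e ≤ p ^ f :=
    fun e f h => Nat.pow_le_pow_right (by omega) h
  have hppos : ∀ e : ℕ, 1 ≤ p ^ e := fun e => Nat.one_le_pow _ _ (by omega)
  have h3 : ∀ e : ℕ, 3 * p ^ e ≤ p ^ (e + 1) := by
    intro e
    rw [pow_succ]
    calc 3 * p ^ e = p ^ e * 3 := by ring
    _ ≤ p ^ e * p := Nat.mul_le_mul_left _ hp3
  have hone : ((p ^ (2 * t + 2) : ℕ) : ZMod N) = 1 := by
    have h1 : p ^ (2 * t + 2) = N + 1 := by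
      have := hppos (2 * t + 2); omega
    rw [h1]
    push_cast [ZMod.natCast_self]
    ring
  have hq : ((p : ℕ) : ZMod N) ^ (2 * t + 2) = 1 := by
    rw [← Nat.cast_pow]; exact hone
  constructor
  · rw [show (2 * t + 2) / 2 = t + 1 from by omega]
    apply coset_card' _ _ (t + 1) (by omega)
    · -- periodicity
      have hcc : ((p : ℕ) : ZMod N) ^ (t + 1) * ((p : ℕ) : ZMod N) ^ (t + 1) = 1 := by
        rw [← pow_add, show t + 1 + (t + 1) = 2 * t + 2 from by ring]
        exact hq
      push_cast
      linear_combination hcc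
    · intro d hd0 hdk heq
      have hnat : (((1 + p ^ (t + 1)) * p ^ d : ℕ) : ZMod N) = ((1 + p ^ (t + 1) : ℕ) : ZMod N) := by
        push_cast
        push_cast at heq
        linear_combination heq
      have hexp : (1 + p ^ (t + 1)) * p ^ d = p ^ d + p ^ (t + 1 + d) := by
        rw [pow_add]; ring
      rw [hexp] at hnat
      refine zmod_ne' N _ _ ?_ ?_ hnat
      · have h1 : 3 ≤ p ^ d := le_trans hp3 (by simpa using hple 1 d hd0)
        have h2 : p ^ (t + 1) ≤ p ^ (t + 1 + d) := hple _ _ (by omega)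
        omega
      · have h1 : p ^ d ≤ p ^ (2 * t + 1) := hple _ _ (by omega)
        have h2 : p ^ (t + 1 + d) ≤ p ^ (2 * t + 1) := hple _ _ (by omega)
        have h4 := h3 (2 * t + 1)
        have h5 := hppos (2 * t + 1)
        have h6 := hppos (t + 1)
        have h7 : 2 * t + 1 + 1 = 2 * t + 2 := by omega
        rw [h7] at h4
        omega
  · intro i hi
    apply coset_card' _ _ (2 * t + 2) (by omega)
    · push_cast
      rw [hq, mul_one]
    · intro d hd0 hdk heq
      rcases Nat.lt_or_ge (i + d) (2 * t + 2) with hcase | hcase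
      · have hnat : (((1 + p ^ i) * p ^ d : ℕ) : ZMod N) = ((1 + p ^ i : ℕ) : ZMod N) := by
          push_cast
          push_cast at heq
          linear_combination heq
        have hexp : (1 + p ^ i) * p ^ d = p ^ d + p ^ (i + d) := by
          rw [pow_add]; ring
        rw [hexp] at hnat
        refine zmod_ne' N _ _ ?_ ?_ hnat
        · have h1 : 3 ≤ p ^ d := le_trans hp3 (by simpa using hple 1 d hd0)
          have h2 : p ^ i ≤ p ^ (i + d) := hple _ _ (by omega)
          omega
        · have h1 : p ^ d ≤ p ^ (2 * t + 1) := hple _ _ (by omega)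
          have h2 : p ^ (i + d) ≤ p ^ (2 * t + 1) := hple _ _ (by omega)
          have h4 := h3 (2 * t + 1)
          have h5 := hppos (2 * t + 1)
          have h6 := hppos i
          have h7 : 2 * t + 1 + 1 = 2 * t + 2 := by omega
          rw [h7] at h4
          omega
      · set r := i + d - (2 * t + 2) with hr
        have hri : r < i := by omega
        have hae : ((p : ℕ) : ZMod N) ^ (i + d) = ((p : ℕ) : ZMod N) ^ r := by
          rw [show i + d = r + (2 * t + 2) from by omega, pow_add, hq, mul_one]
        have hnat : ((p ^ d + p ^ r : ℕ) : ZMod N) = ((1 + p ^ i : ℕ) : ZMod N) := by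
          push_cast
          push_cast at heq
          linear_combination heq - hae
        refine zmod_ne' N _ _ ?_ ?_ hnat
        · have hdi : i + 1 ≤ d := by omega
          have h1 : p ^ (i + 1) ≤ p ^ d := hple _ _ hdi
          have h2 := h3 i
          have h6 := hppos i
          have h8 := hppos r
          omega
        · have h1 : p ^ d ≤ p ^ (2 * t + 1) := hple _ _ (by omega)
          have h2 : p ^ r ≤ p ^ (2 * t + 1) := hple _ _ (by omega)
          have h4 := h3 (2 * t + 1)
          have h5 := hppos (2 * t + 1)
          have h6 := hppos i
          have h7 : 2 * t + 1 + 1 = 2 * t + 2 := by omega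
          rw [h7] at h4
          omega
end

section
/- Let q = 3^m with m odd and 3 ∤ m. With S(α,β,γ) = Σ_{x∈F_q} ζ₃^{Tr(αx² + βx⁴ + γx¹⁰)}, one has Σ_{α,β,γ ∈ F_q} S(α,β,γ)⁴ = (8(3^m − 1)² + 1)·3^{3m}. -/
attribute [local instance] ZMod.algebra

/-!
Expanding the fourth power and summing over `α, β, γ` first, orthogonality of the additive
character `x ↦ ζ₃ ^ Tr x` turns the moment into `q³` times the number `N` of solutions of
`x² + y² + z² + w² = x⁴ + y⁴ + z⁴ + w⁴ = x¹⁰ + y¹⁰ + z¹⁰ + w¹⁰ = 0` in `F_q⁴`.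
In characteristic `3` the tenth-power equation follows from the other two, and the
substitution `y = s + u`, `z = s - u` turns the remaining two into
`x² + w² = s² + u²` and `x⁴ + w⁴ = s⁴ + u⁴`, i.e. `{x², w²} = {s², u²}` as multisets.
Inclusion–exclusion over the two ways of matching the squares gives
`N = 2 (2q - 1)² - (8q - 7) = 8 (q - 1)² + 1`.
-/

open Finset

theorem AddChar.map_sum_eq_prod {A M ι : Type*} [AddCommMonoid A] [CommMonoid M]
    (ψ : AddChar A M) (s : Finset ι) (a : ι → A) : ψ (∑ i ∈ s, a i) = ∏ i ∈ s, ψ (a i) :=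
  map_prod ψ.toMonoidHom (fun i => Multiplicative.ofAdd (a i)) s

theorem Fintype.sum_ite_eq_else {α M : Type*} [Fintype α] [DecidableEq α] [AddCommMonoid M]
    (x₀ : α) (a b : M) :
    ∑ x : α, (if x = x₀ then a else b) = a + (Fintype.card α - 1) • b := by
  rw [Fintype.sum_eq_add_sum_compl x₀, if_pos rfl,
    Finset.sum_congr rfl fun x hx => if_neg (mem_compl.mp hx ∘ mem_singleton.mpr), sum_const,
    card_compl, card_singleton]

theorem Complex.exp_two_pi_I_div_pow_val (N : ℕ) [NeZero N] (j : ZMod N) :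
    exp (2 * Real.pi * I / N) ^ j.val = ZMod.stdAddChar j := by
  rw [ZMod.stdAddChar_apply, ZMod.toCircle_apply, ← exp_nat_mul]
  congr 1
  ring

noncomputable def traceChar (p : ℕ) [Fact p.Prime] (F : Type*) [Field F] [CharP F p] :
    AddChar F ℂ :=
  ZMod.stdAddChar.compAddMonoidHom (Algebra.trace (ZMod p) F).toAddMonoidHom

theorem traceChar_isPrimitive (p : ℕ) [Fact p.Prime] (F : Type*) [Field F] [Fintype F]
    [CharP F p] : (traceChar p F).IsPrimitive := by
  refine AddChar.IsPrimitive.of_ne_one fun h => ?_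
  obtain ⟨t, ht⟩ := Algebra.trace_surjective (ZMod p) F 1
  have h1 : ZMod.stdAddChar (1 : ZMod p) = ZMod.stdAddChar (0 : ZMod p) := by
    simpa [traceChar, ht] using DFunLike.congr_fun h t
  exact one_ne_zero (ZMod.injective_stdAddChar h1)

theorem sum_sum_sum_charSum_pow_eq_card {R : Type*} [CommRing R] [Fintype R] [DecidableEq R]
    {ψ : AddChar R ℂ} (hψ : ψ.IsPrimitive) (f g h : R → R) (n : ℕ) :
    ∑ α : R, ∑ β : R, ∑ γ : R, (∑ x : R, ψ (α * f x + β * g x + γ * h x)) ^ n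
      = (Fintype.card R : ℂ) ^ 3 *
        #{v : Fin n → R | ∑ i, f (v i) = 0 ∧ ∑ i, g (v i) = 0 ∧ ∑ i, h (v i) = 0} := by
  have orth (a : R) : ∑ α, ψ (α * a) = if a = 0 then (Fintype.card R : ℂ) else 0 := by
    simpa using AddChar.sum_mulShift a hψ
  have prod_eq (α β γ : R) (v : Fin n → R) :
      ∏ i, ψ (α * f (v i) + β * g (v i) + γ * h (v i))
        = ψ (α * ∑ i, f (v i)) * ψ (β * ∑ i, g (v i)) * ψ (γ * ∑ i, h (v i)) := by
    rw [← AddChar.map_sum_eq_prod, ← ψ.map_add_eq_mul, ← ψ.map_add_eq_mul, mul_sum, mul_sum,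
      mul_sum, ← sum_add_distrib, ← sum_add_distrib]
  have factor (a b c : R) : ∑ α, ∑ β, ∑ γ, ψ (α * a) * ψ (β * b) * ψ (γ * c)
      = (∑ α, ψ (α * a)) * (∑ β, ψ (β * b)) * (∑ γ, ψ (γ * c)) := by
    simp only [mul_assoc, ← Finset.mul_sum, ← Finset.sum_mul]
  calc _ = ∑ v : Fin n → R, (∑ α, ψ (α * ∑ i, f (v i))) * (∑ β, ψ (β * ∑ i, g (v i)))
          * (∑ γ, ψ (γ * ∑ i, h (v i))) := by
        simp_rw [Fintype.sum_pow, prod_eq, ← factor,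
          Finset.sum_comm (s := (univ : Finset R)) (t := (univ : Finset (Fin n → R)))]
    _ = ∑ v : Fin n → R, if ∑ i, f (v i) = 0 ∧ ∑ i, g (v i) = 0 ∧ ∑ i, h (v i) = 0
          then (Fintype.card R : ℂ) ^ 3 else 0 := by
        simp_rw [orth]
        refine sum_congr rfl fun v _ => ?_
        split_ifs <;> simp_all [pow_three, mul_assoc]
    _ = _ := by
        rw [Finset.sum_ite, sum_const_zero, add_zero, sum_const, nsmul_eq_mul, mul_comm]

section CharNeTwo

variable {F : Type*} [Field F]

theorem add_eq_add_and_sq_add_sq_eq_iff (hF : ringChar F ≠ 2) {a b c d : F} :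
    a + b = c + d ∧ a ^ 2 + b ^ 2 = c ^ 2 + d ^ 2 ↔ (a = c ∧ b = d) ∨ (a = d ∧ b = c) := by
  constructor
  · rintro ⟨hsum, hsq⟩
    have hprod : a * b = c * d :=
      mul_left_cancel₀ (Ring.two_ne_zero hF) (by linear_combination (a + b + c + d) * hsum - hsq)
    have hroots : (a - c) * (a - d) = 0 := by linear_combination a * hsum - hprod
    rcases mul_eq_zero.mp hroots with h | h
    · exact Or.inl ⟨by linear_combination h, by linear_combination hsum - h⟩
    · exact Or.inr ⟨by linear_combination h, by linear_combination hsum - h⟩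
  · rintro (⟨rfl, rfl⟩ | ⟨rfl, rfl⟩) <;> constructor <;> ring

variable [Fintype F] [DecidableEq F]

theorem card_sq_eq_sq (hF : ringChar F ≠ 2) (x : F) :
    #{s : F | s ^ 2 = x ^ 2} = if x = 0 then 1 else 2 := by
  have hroots : ({s | s ^ 2 = x ^ 2} : Finset F) = {x, -x} := by
    ext s
    simp [sq_eq_sq_iff_eq_or_eq_neg]
  split_ifs with hx
  · rw [hroots, hx, neg_zero, insert_eq_of_mem (mem_singleton_self 0), card_singleton]
  · rw [hroots, card_pair]
    exact fun h => hx ((Ring.eq_self_iff_eq_zero_of_char_ne_two hF).mp h.symm)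

theorem card_pairs_sq_eq_sq (hF : ringChar F ≠ 2) :
    #{e : F × F | e.1 ^ 2 = e.2 ^ 2} = 2 * (Fintype.card F - 1) + 1 := by
  have fibers : #{e : F × F | e.1 ^ 2 = e.2 ^ 2} = ∑ x : F, #{s : F | s ^ 2 = x ^ 2} := by
    simp_rw [card_filter, Fintype.sum_prod_type, eq_comm]
  simp_rw [fibers, card_sq_eq_sq hF]
  rw [Fintype.sum_ite_eq_else, smul_eq_mul]
  ring

theorem sum_card_sq_eq_sq_cube (hF : ringChar F ≠ 2) :
    ∑ x : F, #{s : F | s ^ 2 = x ^ 2} ^ 3 = 8 * (Fintype.card F - 1) + 1 := by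
  simp_rw [card_sq_eq_sq hF, ite_pow]
  rw [Fintype.sum_ite_eq_else, smul_eq_mul]
  ring

theorem card_sq_eq_sq_or_swap (hF : ringChar F ≠ 2) :
    #{p : (F × F) × (F × F) | (p.1.1 ^ 2 = p.1.2 ^ 2 ∧ p.2.1 ^ 2 = p.2.2 ^ 2) ∨
        (p.1.1 ^ 2 = p.2.2 ^ 2 ∧ p.2.1 ^ 2 = p.1.2 ^ 2)} = 8 * (Fintype.card F - 1) ^ 2 + 1 := by
  have hP : #{p : (F × F) × (F × F) | p.1.1 ^ 2 = p.1.2 ^ 2 ∧ p.2.1 ^ 2 = p.2.2 ^ 2}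
      = (2 * (Fintype.card F - 1) + 1) ^ 2 := by
    rw [sq, ← card_pairs_sq_eq_sq hF, ← card_product, ← univ_product_univ, ← filter_product]
  have hQ : #{p : (F × F) × (F × F) | p.1.1 ^ 2 = p.2.2 ^ 2 ∧ p.2.1 ^ 2 = p.1.2 ^ 2}
      = (2 * (Fintype.card F - 1) + 1) ^ 2 := by
    rw [← hP]
    let swap (p : (F × F) × (F × F)) : (F × F) × (F × F) := ((p.1.1, p.2.2), (p.2.1, p.1.2))
    exact card_nbij' swap swap (fun _ h => by simpa [swap] using h)
      (fun _ h => by simpa [swap] using h) (fun _ _ => rfl) (fun _ _ => rfl)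
  have hPQ : #{p : (F × F) × (F × F) | (p.1.1 ^ 2 = p.1.2 ^ 2 ∧ p.2.1 ^ 2 = p.2.2 ^ 2) ∧
      (p.1.1 ^ 2 = p.2.2 ^ 2 ∧ p.2.1 ^ 2 = p.1.2 ^ 2)} = 8 * (Fintype.card F - 1) + 1 := by
    rw [← sum_card_sq_eq_sq_cube hF, card_filter]
    simp_rw [Fintype.sum_prod_type]
    refine sum_congr rfl fun x _ => ?_
    have indicator (s w u : F) :
        (if (x ^ 2 = s ^ 2 ∧ w ^ 2 = u ^ 2) ∧ x ^ 2 = u ^ 2 ∧ w ^ 2 = s ^ 2 then 1 else 0)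
          = (if s ^ 2 = x ^ 2 then 1 else 0) * ((if w ^ 2 = x ^ 2 then 1 else 0) *
              (if u ^ 2 = x ^ 2 then 1 else 0)) := by
      grind
    simp_rw [indicator, ← mul_sum, ← sum_mul, ← card_filter]
    ring
  have incl_excl := card_union_add_card_inter
    ({p : (F × F) × (F × F) | p.1.1 ^ 2 = p.1.2 ^ 2 ∧ p.2.1 ^ 2 = p.2.2 ^ 2} : Finset _)
    {p : (F × F) × (F × F) | p.1.1 ^ 2 = p.2.2 ^ 2 ∧ p.2.1 ^ 2 = p.1.2 ^ 2}
  rw [← filter_or, ← filter_and, hP, hQ, hPQ] at incl_excl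
  nlinarith

end CharNeTwo

section CharThree

variable {F : Type*} [Field F] [CharP F 3]

-- Newton's identities for `x², y², z², w²`: `p₁ = p₂ = 0` forces `e₁ = e₂ = 0`, hence
-- `p₅ = e₃ p₂ - e₄ p₁ = 0`.
theorem sum_pow_ten_eq_zero {x y z w : F} (h2 : x ^ 2 + y ^ 2 + z ^ 2 + w ^ 2 = 0)
    (h4 : x ^ 4 + y ^ 4 + z ^ 4 + w ^ 4 = 0) : x ^ 10 + y ^ 10 + z ^ 10 + w ^ 10 = 0 := by
  grind

theorem power_sums_eq_zero_iff_sq_eq_sq_or_swap (x s w u : F) :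
    (x ^ 2 + (s + u) ^ 2 + (s - u) ^ 2 + w ^ 2 = 0 ∧
      x ^ 4 + (s + u) ^ 4 + (s - u) ^ 4 + w ^ 4 = 0 ∧
      x ^ 10 + (s + u) ^ 10 + (s - u) ^ 10 + w ^ 10 = 0) ↔
    (x ^ 2 = s ^ 2 ∧ w ^ 2 = u ^ 2) ∨ (x ^ 2 = u ^ 2 ∧ w ^ 2 = s ^ 2) := by
  have quadratic : x ^ 2 + (s + u) ^ 2 + (s - u) ^ 2 + w ^ 2
      = x ^ 2 + w ^ 2 - (s ^ 2 + u ^ 2) := by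
    grind
  have quartic : x ^ 4 + (s + u) ^ 4 + (s - u) ^ 4 + w ^ 4
      = (x ^ 2) ^ 2 + (w ^ 2) ^ 2 - ((s ^ 2) ^ 2 + (u ^ 2) ^ 2) := by
    grind
  rw [← add_eq_add_and_sq_add_sq_eq_iff (by rw [ringChar.eq F 3]; decide), quadratic, quartic,
    sub_eq_zero, sub_eq_zero]
  exact ⟨fun h => ⟨h.1, h.2.1⟩, fun h => ⟨h.1, h.2, sum_pow_ten_eq_zero
    (by rw [quadratic, h.1, sub_self]) (by rw [quartic, h.2, sub_self])⟩⟩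

-- The inverse divides by `2`, which is `-1` in characteristic `3`.
variable (F) in
def sumDiffEquiv : (F × F) × (F × F) ≃ (Fin 4 → F) where
  toFun p := ![p.1.1, p.1.2 + p.2.2, p.1.2 - p.2.2, p.2.1]
  invFun v := ((v 0, -(v 1 + v 2)), (v 3, v 2 - v 1))
  left_inv p := by ext <;> simp <;> grind
  right_inv v := by
    ext i
    fin_cases i <;> simp <;> grind

theorem card_power_sums_eq_zero [Fintype F] [DecidableEq F] :
    #{v : Fin 4 → F | ∑ i, v i ^ 2 = 0 ∧ ∑ i, v i ^ 4 = 0 ∧ ∑ i, v i ^ 10 = 0}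
      = 8 * (Fintype.card F - 1) ^ 2 + 1 := by
  rw [← card_sq_eq_sq_or_swap (by rw [ringChar.eq F 3]; decide)]
  refine (card_equiv (sumDiffEquiv F) fun p => ?_).symm
  simp [sumDiffEquiv, Fin.sum_univ_four, ← power_sums_eq_zero_iff_sq_eq_sq_or_swap]

end CharThree

open Complex in
theorem stmt_15_general (m : ℕ)
    (F : Type*) [Field F] [Fintype F] [CharP F 3] (hcard : Fintype.card F = 3 ^ m)
    (ζ : ℂ) (hζ : ζ = Complex.exp (2 * Real.pi * I / 3)) :
    (∑ α : F, ∑ β : F, ∑ γ : F,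
        (∑ x : F, ζ ^ (Algebra.trace (ZMod 3) F
              (α * x ^ 2 + β * x ^ 4 + γ * x ^ 10)).val) ^ 4)
      = (8 * ((3 : ℂ) ^ m - 1) ^ 2 + 1) * (3 : ℂ) ^ (3 * m) := by
  classical
  have hψ (t : F) : ζ ^ (Algebra.trace (ZMod 3) F t).val = traceChar 3 F t := by
    rw [hζ, show (3 : ℂ) = ((3 : ℕ) : ℂ) by norm_num, exp_two_pi_I_div_pow_val]
    rfl
  simp_rw [hψ]
  rw [sum_sum_sum_charSum_pow_eq_card (traceChar_isPrimitive 3 F) (· ^ 2) (· ^ 4) (· ^ 10),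
    card_power_sums_eq_zero, hcard]
  push_cast [Nat.cast_sub (Nat.one_le_pow m 3 three_pos)]
  ring

open Complex in
theorem stmt_15 (m : ℕ) (hm : Odd m) (hm3 : ¬ (3 ∣ m))
    (F : Type*) [Field F] [Fintype F] [CharP F 3] (hcard : Fintype.card F = 3 ^ m)
    (ζ : ℂ) (hζ : ζ = Complex.exp (2 * Real.pi * I / 3)) :
    (∑ α : F, ∑ β : F, ∑ γ : F,
        (∑ x : F, ζ ^ (Algebra.trace (ZMod 3) F
              (α * x ^ 2 + β * x ^ 4 + γ * x ^ 10)).val) ^ 4)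
      = (8 * ((3 : ℂ) ^ m - 1) ^ 2 + 1) * (3 : ℂ) ^ (3 * m) :=
  stmt_15_general m F hcard ζ hζ
end

section
/- Let p be an odd prime, m a positive integer, and 0 ≤ d ≤ ⌊m/2⌋. For (α₀,...,α_d) ∈ F_{p^m}^{d+1} not all zero, let F(X) be the quadratic form on F_p^m given by F(X) = Tr(α₀x² + α₁x^{p+1} + ... + α_d x^{p^d+1}) under an F_p-basis identification of F_{p^m} with F_p^m. Then the rank of the symmetric matrix of F is at least m − 2d. -/
/-!
Polarizing `Q(x) = Tr(∑ αₖ x^(pᵏ+1))` shows that a vector in the kernel of `H` corresponds to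
`y ∈ F` with `Tr(∑ αₖ (x^(pᵏ) y + x y^(pᵏ))) = 0` for all `x`. Moving the Frobenius powers off
`x` (the trace is Frobenius invariant) turns this into `Tr(x · L(y)) = 0` for the additive map
`L(y) = ∑ (αₖ y)^(p⁻ᵏ) + αₖ y^(pᵏ)`, so `L(y) = 0` by nondegeneracy of the trace form.
Raising to the `pᵈ`-th power makes `L(y)^(pᵈ)` a nonzero polynomial in `y` of degree at most
`p^(2d)` (nonzero because `p` is odd), so the kernel has at most `p^(2d)` elements, i.e.
dimension at most `2d`, and rank–nullity gives the bound.
-/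

attribute [local instance] ZMod.algebra

open Polynomial Module Matrix

theorem Matrix.IsSymm.dotProduct_mulVec_add_of_mulVec_eq_zero {n R : Type*} [Fintype n]
    [CommRing R] {H : Matrix n n R} (hH : H.IsSymm) (X : n → R) {Y : n → R}
    (hY : H *ᵥ Y = 0) :
    (X + Y) ⬝ᵥ H *ᵥ (X + Y) = X ⬝ᵥ H *ᵥ X + Y ⬝ᵥ H *ᵥ Y := by
  have hYH : Y ᵥ* H = 0 := by rw [← hH.eq, vecMul_transpose, hY]
  rw [mulVec_add, hY, add_zero, add_dotProduct, dotProduct_mulVec Y, hYH, zero_dotProduct,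
    dotProduct_zero]

theorem Algebra.trace_zmod_map_ringEquiv {n : ℕ} {F : Type*} [Field F] [CharP F n]
    (σ : F ≃+* F) (z : F) : Algebra.trace (ZMod n) F (σ z) = Algebra.trace (ZMod n) F z :=
  Algebra.trace_eq_of_algEquiv (AlgEquiv.ofRingEquiv (f := σ) fun c => by
    simpa using DFunLike.congr_fun (RingHom.ext_zmod ((σ : F →+* F).comp (algebraMap (ZMod n) F))
      (algebraMap (ZMod n) F)) c) z

theorem iterateFrobeniusEquiv_symm_apply_pow_pow {R : Type*} [CommSemiring R] (p : ℕ)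
    [ExpChar R p] [PerfectRing R p] {k n : ℕ} (hkn : k ≤ n) (z : R) :
    (iterateFrobeniusEquiv R p k).symm z ^ p ^ n = z ^ p ^ (n - k) := by
  rw [← Nat.add_sub_cancel' hkn, pow_add, pow_mul, Nat.add_sub_cancel_left]
  exact congrArg (· ^ p ^ (n - k)) ((iterateFrobeniusEquiv R p k).apply_symm_apply z)

theorem Submodule.finrank_le_of_forall_isRoot {K F : Type*} [Field K] [Finite K] [Field F]
    [Module K F] (W : Submodule K F) {P : F[X]} (hP : P ≠ 0) (hW : ∀ y ∈ W, P.IsRoot y)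
    {n : ℕ} (hdeg : P.natDegree ≤ Nat.card K ^ n) : finrank K W ≤ n := by
  classical
  have hsub : (W : Set F) ⊆ P.roots.toFinset := fun y hy => by simpa [hP] using hW y hy
  have : Finite W := (P.roots.toFinset.finite_toSet.subset hsub).to_subtype
  have hcard : Nat.card K ^ finrank K W ≤ Nat.card K ^ n := calc
    Nat.card K ^ finrank K W = Nat.card W := Module.natCard_eq_pow_finrank.symm
    _ = (W : Set F).ncard := Nat.card_coe_set_eq _
    _ ≤ P.roots.toFinset.card := by
      simpa only [Set.ncard_coe_finset] using Set.ncard_le_ncard hsub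
    _ ≤ P.natDegree := (Multiset.toFinset_card_le _).trans (card_roots' P)
    _ ≤ Nat.card K ^ n := hdeg
  exact (Nat.pow_le_pow_iff_right Finite.one_lt_card).1 hcard

section DembowskiOstrom

variable {F : Type*} [Field F] (p : ℕ) {d : ℕ}

def dembowskiOstrom (α : Fin (d + 1) → F) (x : F) : F :=
  ∑ k, α k * x ^ (p ^ (k : ℕ) + 1)

def dembowskiOstromPolar (α : Fin (d + 1) → F) (x y : F) : F :=
  ∑ k, α k * (x ^ p ^ (k : ℕ) * y + x * y ^ p ^ (k : ℕ))

/-- `radicalMap p α` raised to the power `pᵈ`, which clears the inverse Frobenius powers. -/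
noncomputable def radicalPoly (α : Fin (d + 1) → F) : F[X] :=
  ∑ k : Fin (d + 1),
    (C (α k ^ p ^ d) * X ^ p ^ (d + k) + C (α k ^ p ^ (d - k)) * X ^ p ^ (d - k))

theorem natDegree_radicalPoly_le (hp : 0 < p) (α : Fin (d + 1) → F) :
    (radicalPoly p α).natDegree ≤ p ^ (2 * d) := by
  refine natDegree_sum_le_of_forall_le _ _ fun k _ =>
    (natDegree_add_le _ _).trans (max_le ?_ ?_) <;>
  refine (natDegree_C_mul_X_pow_le _ _).trans (Nat.pow_le_pow_right hp ?_) <;> omega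

/-- For `j = 0` the two families of monomials meet in `X^(pᵈ)`. -/
theorem coeff_radicalPoly (hp : 1 < p) (α : Fin (d + 1) → F) (j : Fin (d + 1)) :
    (radicalPoly p α).coeff (p ^ (d + j)) = (if (j : ℕ) = 0 then 2 else 1) * α j ^ p ^ d := by
  have hmeet (k : Fin (d + 1)) : d + j = d - k ↔ (j : ℕ) = 0 ∧ k = 0 := by
    rw [← Fin.val_eq_zero_iff]; have := k.is_le; omega
  simp only [radicalPoly, finsetSum_coeff, coeff_add, coeff_C_mul_X_pow, Nat.pow_right_inj hp,
    Finset.sum_add_distrib, add_right_inj, Fin.val_inj, hmeet, ite_and, Finset.sum_ite_eq,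
    Finset.mem_univ, if_true]
  split_ifs with hj0
  · obtain rfl := Fin.val_eq_zero_iff.1 hj0
    simp [two_mul]
  · simp

theorem radicalPoly_ne_zero [CharP F p] (hp : Odd p) {α : Fin (d + 1) → F} (hα : α ≠ 0) :
    radicalPoly p α ≠ 0 := by
  obtain ⟨j, hj⟩ := Function.ne_iff.1 hα
  have hp1 : 1 < p := lt_of_le_of_ne hp.pos (CharP.char_ne_one F p).symm
  have h2 : (2 : F) ≠ 0 :=
    Ring.two_ne_zero (by rw [ringChar.eq F p]; rintro rfl; exact absurd hp (by decide))
  refine ne_of_apply_ne (coeff · (p ^ (d + j))) ?_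
  rw [coeff_radicalPoly p hp1, coeff_zero]
  exact mul_ne_zero (by split_ifs <;> simp [h2]) (pow_ne_zero _ hj)

variable [Fact p.Prime] [CharP F p]

theorem dembowskiOstrom_add (α : Fin (d + 1) → F) (x y : F) :
    dembowskiOstrom p α (x + y) =
      dembowskiOstrom p α x + dembowskiOstrom p α y + dembowskiOstromPolar p α x y := by
  simp only [dembowskiOstrom, dembowskiOstromPolar, ← Finset.sum_add_distrib, pow_succ,
    add_pow_char_pow]
  exact Finset.sum_congr rfl fun k _ => by ring

/-- The adjoint of `y ↦ dembowskiOstromPolar p α · y` with respect to the trace form. -/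
noncomputable def radicalMap [PerfectRing F p] (α : Fin (d + 1) → F) (y : F) : F :=
  ∑ k : Fin (d + 1), ((iterateFrobeniusEquiv F p k).symm (α k * y) + α k * y ^ p ^ (k : ℕ))

theorem eval_radicalPoly [PerfectRing F p] (α : Fin (d + 1) → F) (y : F) :
    (radicalPoly p α).eval y = radicalMap p α y ^ p ^ d := by
  simp only [radicalPoly, radicalMap, eval_finsetSum, eval_add, eval_mul, eval_C, eval_pow,
    eval_X, sum_pow_char_pow, add_pow_char_pow,
    iterateFrobeniusEquiv_symm_apply_pow_pow p (Fin.is_le _)]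
  refine Finset.sum_congr rfl fun k _ => ?_
  rw [mul_pow, mul_pow, ← pow_mul, ← pow_add, add_comm (k : ℕ) d, add_comm]

theorem trace_dembowskiOstromPolar_eq_zero_of_mulVec_eq_zero {ι : Type*} [Fintype ι]
    (b : Basis ι (ZMod p) F) {α : Fin (d + 1) → F} {H : Matrix ι ι (ZMod p)} (hH : H.IsSymm)
    (hQ : ∀ X, X ⬝ᵥ H *ᵥ X =
      Algebra.trace (ZMod p) F (dembowskiOstrom p α (b.equivFun.symm X)))
    {Y : ι → ZMod p} (hY : H *ᵥ Y = 0) (x : F) :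
    Algebra.trace (ZMod p) F (dembowskiOstromPolar p α x (b.equivFun.symm Y)) = 0 := by
  have hsplit := hH.dotProduct_mulVec_add_of_mulVec_eq_zero (b.equivFun x) hY
  rw [hQ, hQ, hQ, map_add, LinearEquiv.symm_apply_apply, dembowskiOstrom_add, map_add,
    map_add] at hsplit
  exact add_eq_left.1 hsplit

variable [Finite F]

theorem trace_dembowskiOstromPolar (α : Fin (d + 1) → F) (x y : F) :
    Algebra.trace (ZMod p) F (dembowskiOstromPolar p α x y) =
      Algebra.trace (ZMod p) F (x * radicalMap p α y) := by
  have hfrob (k : ℕ) (a : F) : Algebra.trace (ZMod p) F (a * (x ^ p ^ k * y)) =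
      Algebra.trace (ZMod p) F (x * (iterateFrobeniusEquiv F p k).symm (a * y)) := by
    rw [← Algebra.trace_zmod_map_ringEquiv (iterateFrobeniusEquiv F p k).symm,
      mul_left_comm, map_mul, ← iterateFrobeniusEquiv_def, RingEquiv.symm_apply_apply]
  simp only [dembowskiOstromPolar, radicalMap, Finset.mul_sum, map_sum, mul_add, map_add, hfrob,
    mul_left_comm (α _) x]

theorem radicalMap_eq_zero {α : Fin (d + 1) → F} {y : F}
    (hy : ∀ x, Algebra.trace (ZMod p) F (dembowskiOstromPolar p α x y) = 0) :
    radicalMap p α y = 0 :=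
  (traceForm_nondegenerate (ZMod p) F).1 _ fun x => by
    rw [Algebra.traceForm_apply, mul_comm, ← trace_dembowskiOstromPolar, hy]

end DembowskiOstrom

theorem stmt_18_general (p m d : ℕ) [Fact p.Prime] (hp2 : Odd p)
    (F : Type*) [Field F] [Fintype F] [CharP F p]
    (b : Module.Basis (Fin m) (ZMod p) F)
    (α : Fin (d + 1) → F) (hα : α ≠ 0)
    (H : Matrix (Fin m) (Fin m) (ZMod p)) (hH : H.IsSymm)
    (hF : ∀ X : Fin m → ZMod p,
      (∑ i, ∑ j, X i * H i j * X j) =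
        Algebra.trace (ZMod p) F
          (∑ k : Fin (d + 1), α k * (∑ j, X j • b j) ^ (p ^ (k : ℕ) + 1))) :
    m - 2 * d ≤ H.rank := by
  have hQ (X : Fin m → ZMod p) :
      X ⬝ᵥ H *ᵥ X = Algebra.trace (ZMod p) F (dembowskiOstrom p α (b.equivFun.symm X)) := by
    simpa [dotProduct, mulVec, Finset.mul_sum, mul_assoc, dembowskiOstrom] using hF X
  have hroots : ∀ y ∈ (LinearMap.ker H.mulVecLin).map b.equivFun.symm.toLinearMap,
      (radicalPoly p α).IsRoot y := by
    rintro _ ⟨Y, hY, rfl⟩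
    rw [LinearEquiv.coe_coe, IsRoot, eval_radicalPoly, radicalMap_eq_zero p
      (trace_dembowskiOstromPolar_eq_zero_of_mulVec_eq_zero p b hH hQ hY),
      zero_pow (pow_ne_zero _ (Fact.out : p.Prime).ne_zero)]
  have hker : finrank (ZMod p) (LinearMap.ker H.mulVecLin) ≤ 2 * d := by
    rw [← LinearEquiv.finrank_map_eq b.equivFun.symm]
    refine Submodule.finrank_le_of_forall_isRoot _ (radicalPoly_ne_zero p hp2 hα) hroots ?_
    simpa using natDegree_radicalPoly_le p (Fact.out : p.Prime).pos α
  have hrank : H.rank + finrank (ZMod p) (LinearMap.ker H.mulVecLin) = m :=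
    (LinearMap.finrank_range_add_finrank_ker H.mulVecLin).trans (finrank_fin_fun _)
  omega

theorem stmt_18 (p m d : ℕ) [Fact p.Prime] (hp2 : Odd p) (hm : 0 < m)
    (hd : d ≤ m / 2)
    (F : Type*) [Field F] [Fintype F] [CharP F p]
    (b : Module.Basis (Fin m) (ZMod p) F)
    (α : Fin (d + 1) → F) (hα : α ≠ 0)
    (H : Matrix (Fin m) (Fin m) (ZMod p)) (hH : H.IsSymm)
    (hF : ∀ X : Fin m → ZMod p,
      (∑ i, ∑ j, X i * H i j * X j) =
        Algebra.trace (ZMod p) F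
          (∑ k : Fin (d + 1), α k * (∑ j, X j • b j) ^ (p ^ (k : ℕ) + 1))) :
    m - 2 * d ≤ H.rank :=
  stmt_18_general p m d hp2 F b α hα H hH hF
end
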